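/- arXiv:1312.2027 — 5 statements merged into one kernel-verified Lean document; each statement's English description precedes it below -/
import Mathlib

section
/- For a square matrix M and x ≥ 0, ∫₀^x e^{M·t} dt = γ(M·x) · x, where γ(N) = Σ_{k≥0} N^k/(k+1)!. -/
/-!
Expand `exp (t • a)` as `∑ (tⁿ / n!) • aⁿ` and integrate termwise over `[0, x]`: for `t` between
`0` and `x` the terms are dominated by those of the convergent series `∑ (|x|ⁿ / n!) ‖aⁿ‖`, and
`∫₀ˣ tⁿ / n! dt = xⁿ⁺¹ / (n + 1)!`, which is the `n`-th term of `x • γ(x • a)`.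
-/

open MeasureTheory intervalIntegral

attribute [local instance] Matrix.linftyOpNormedRing Matrix.linftyOpNormedAlgebra

/-- γ(N) = Σ_{k≥0} N^k/(k+1)!. -/
noncomputable def matGamma {m : ℕ} (N : Matrix (Fin m) (Fin m) ℝ) : Matrix (Fin m) (Fin m) ℝ :=
  ∑' k : ℕ, (((k + 1).factorial : ℝ))⁻¹ • N ^ k

open scoped Nat

theorem integral_pow_div_factorial (n : ℕ) (x : ℝ) :
    ∫ t in (0 : ℝ)..x, t ^ n / n ! = x ^ (n + 1) / (n + 1)! := by
  rw [intervalIntegral.integral_div, integral_pow, Nat.factorial_succ]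
  push_cast
  field_simp
  ring

section NormedAlgebra

variable {𝔸 : Type*} [NormedRing 𝔸] [NormedAlgebra ℝ 𝔸] [CompleteSpace 𝔸]

theorem hasSum_integral_exp_smul (a : 𝔸) (x : ℝ) :
    HasSum (fun n : ℕ => (x ^ (n + 1) / (n + 1)!) • a ^ n)
      (∫ t in (0 : ℝ)..x, NormedSpace.exp (t • a)) := by
  have hexp (t : ℝ) : HasSum (fun n : ℕ => (t ^ n / n !) • a ^ n) (NormedSpace.exp (t • a)) := by
    simpa only [smul_pow, smul_smul, inv_mul_eq_div] using
      NormedSpace.exp_series_hasSum_exp' (𝕂 := ℝ) (t • a)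
  have hterm (n : ℕ) :
      ∫ t in (0 : ℝ)..x, (t ^ n / n !) • a ^ n = (x ^ (n + 1) / (n + 1)!) • a ^ n := by
    rw [intervalIntegral.integral_smul_const, integral_pow_div_factorial]
  have hsummable : Summable fun n : ℕ => |x| ^ n / n ! * ‖a ^ n‖ := by
    simpa only [smul_pow, smul_smul, norm_smul, Real.norm_eq_abs, abs_mul, abs_pow, abs_inv,
      Nat.abs_cast, inv_mul_eq_div, abs_div] using
      NormedSpace.norm_expSeries_summable' (𝕂 := ℝ) (x • a)
  simp only [← hterm]
  refine hasSum_integral_of_dominated_convergence (fun n _ => |x| ^ n / n ! * ‖a ^ n‖)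
    (fun n => by fun_prop) (fun n => ae_of_all _ fun t ht => ?_)
    (ae_of_all _ fun _ _ => hsummable) intervalIntegrable_const
    (ae_of_all _ fun t _ => hexp t)
  have ht : |t| ≤ |x| := by
    rcases Set.mem_uIoc.1 ht with h | h
    · exact abs_le_abs_of_nonneg h.1.le h.2
    · exact abs_le_abs_of_nonpos h.2 h.1.le
  rw [norm_smul, Real.norm_eq_abs, abs_div, abs_pow, Nat.abs_cast]
  gcongr

theorem summable_inv_factorial_succ_smul_pow (a : 𝔸) :
    Summable fun k : ℕ => ((k + 1)! : ℝ)⁻¹ • a ^ k := by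
  refine .of_norm_bounded (NormedSpace.norm_expSeries_summable' (𝕂 := ℝ) a) fun k => ?_
  rw [norm_smul, norm_smul]
  gcongr
  simp only [norm_inv, Real.norm_natCast]
  gcongr
  exact k.le_succ

end NormedAlgebra

theorem hasSum_matGamma {m : ℕ} (N : Matrix (Fin m) (Fin m) ℝ) :
    HasSum (fun k : ℕ => ((k + 1)! : ℝ)⁻¹ • N ^ k) (matGamma N) :=
  (summable_inv_factorial_succ_smul_pow N).hasSum

theorem integral_exp_eq_matGamma_smul_general {m : ℕ} (M : Matrix (Fin m) (Fin m) ℝ) (x : ℝ) :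
    (∫ t in (0:ℝ)..x, NormedSpace.exp (t • M)) = x • matGamma (x • M) := by
  have hscale (k : ℕ) :
      x • (((k + 1)! : ℝ)⁻¹ • (x • M) ^ k) = (x ^ (k + 1) / (k + 1)!) • M ^ k := by
    rw [smul_pow, smul_smul, smul_smul, pow_succ]
    ring_nf
  have hsum := (hasSum_matGamma (x • M)).const_smul x
  simp only [hscale] at hsum
  exact (hasSum_integral_exp_smul M x).unique hsum

/-- For x ≥ 0, ∫₀^x e^{M·t} dt = γ(M·x) · x. -/
theorem integral_exp_eq_matGamma_smul {m : ℕ} (M : Matrix (Fin m) (Fin m) ℝ) (x : ℝ)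
    (hx : 0 ≤ x) :
    (∫ t in (0:ℝ)..x, NormedSpace.exp (t • M)) = x • matGamma (x • M) :=
  integral_exp_eq_matGamma_smul_general M x
end

section
/- Let α_n be the weighted number of permutations π of {1,…,n}, with weight Wt(π) = ∏ wt taken over consecutive descent patterns of length 2, where wt(aa)=0, wt(bb)=2, wt(ab)=wt(ba)=1 (a = ascent, b = descent); equivalently α_n = Σ 2^{dd(π)} over permutations π of [n] with no double ascents, where dd(π) is the number of double descents. Then the exponential generating function F(z) = Σ_{n≥2} α_n z^n/n! equals F(z) = (e^z − 2 + e^{−z})/(1−z). -/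
open Finset
open scoped Classical

/-- π has an ascent at position i (0-indexed): π_i < π_{i+1}. -/
def Asc {n : ℕ} (π : Equiv.Perm (Fin n)) (i : ℕ) : Prop :=
  ∃ h : i + 1 < n, π ⟨i, Nat.lt_of_succ_lt h⟩ < π ⟨i + 1, h⟩

/-- π has a descent at position i (0-indexed): π_i > π_{i+1}. -/
def Desc {n : ℕ} (π : Equiv.Perm (Fin n)) (i : ℕ) : Prop :=
  ∃ h : i + 1 < n, π ⟨i + 1, h⟩ < π ⟨i, Nat.lt_of_succ_lt h⟩

/-- The number of double descents of π: positions i with π_i > π_{i+1} > π_{i+2}. -/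
noncomputable def dd {n : ℕ} (π : Equiv.Perm (Fin n)) : ℕ :=
  ((Finset.range n).filter (fun i => Desc π i ∧ Desc π (i + 1))).card

/-- π has no double ascents: no i with π_i < π_{i+1} < π_{i+2}. -/
def NoDoubleAsc {n : ℕ} (π : Equiv.Perm (Fin n)) : Prop :=
  ∀ i : ℕ, ¬ (Asc π i ∧ Asc π (i + 1))

/-- α_n = Σ 2^{dd(π)} over all permutations of [n] with no double ascents. -/
noncomputable def alpha (n : ℕ) : ℕ :=
  ∑ π ∈ Finset.univ.filter (fun π : Equiv.Perm (Fin n) => NoDoubleAsc π), 2 ^ dd π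

noncomputable def Fw {n : ℕ} (π : Equiv.Perm (Fin n)) : ℕ :=
  if NoDoubleAsc π then 2 ^ dd π else 0

/-! ### basic Asc/Desc facts -/

lemma asc_not_desc {n : ℕ} {π : Equiv.Perm (Fin n)} {i : ℕ} (h : Asc π i) : ¬ Desc π i := by
  rintro ⟨h1, hlt⟩
  obtain ⟨h2, hlt2⟩ := h
  exact absurd hlt2 (lt_asymm hlt)

lemma asc_or_desc {n : ℕ} (π : Equiv.Perm (Fin n)) (i : ℕ) (h : i + 1 < n) :
    Asc π i ∨ Desc π i := by
  have hne : π ⟨i, Nat.lt_of_succ_lt h⟩ ≠ π ⟨i + 1, h⟩ := by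
    intro hc
    have := π.injective hc
    simp [Fin.ext_iff] at this
  rcases lt_or_gt_of_ne hne with h1 | h1
  · exact Or.inl ⟨h, h1⟩
  · exact Or.inr ⟨h, h1⟩

/-! ### the building bijection -/

def bmap {n : ℕ} (p : Fin (n+1)) (σ : Equiv.Perm (Fin n)) : Fin (n+1) → Fin (n+1) :=
  Fin.cons p (fun i => p.succAbove (σ i))

lemma bmap_injective {n : ℕ} (p : Fin (n+1)) (σ : Equiv.Perm (Fin n)) :
    Function.Injective (bmap p σ) := by
  intro a b hab
  induction a using Fin.cases with
  | zero =>
    induction b using Fin.cases with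
    | zero => rfl
    | succ j =>
      simp only [bmap, Fin.cons_zero, Fin.cons_succ] at hab
      exact absurd hab.symm (Fin.succAbove_ne p (σ j))
  | succ i =>
    induction b using Fin.cases with
    | zero =>
      simp only [bmap, Fin.cons_zero, Fin.cons_succ] at hab
      exact absurd hab (Fin.succAbove_ne p (σ i))
    | succ j =>
      simp only [bmap, Fin.cons_succ] at hab
      have := σ.injective (Fin.succAbove_right_injective hab)
      rw [this]

noncomputable def bperm {n : ℕ} (p : Fin (n+1)) (σ : Equiv.Perm (Fin n)) :
    Equiv.Perm (Fin (n+1)) :=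
  Equiv.ofBijective _ ((Finite.injective_iff_bijective).mp (bmap_injective p σ))

lemma bperm_zero {n : ℕ} (p : Fin (n+1)) (σ : Equiv.Perm (Fin n)) (h : 0 < n+1) :
    bperm p σ ⟨0, h⟩ = p := by
  show bmap p σ ⟨0, h⟩ = p
  have : (⟨0, h⟩ : Fin (n+1)) = 0 := rfl
  rw [this, bmap, Fin.cons_zero]

lemma bperm_succ {n : ℕ} (p : Fin (n+1)) (σ : Equiv.Perm (Fin n)) (i : ℕ) (h : i + 1 < n + 1) :
    bperm p σ ⟨i+1, h⟩ = p.succAbove (σ ⟨i, Nat.succ_lt_succ_iff.mp h⟩) := by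
  show bmap p σ ⟨i+1, h⟩ = _
  have : (⟨i+1, h⟩ : Fin (n+1)) = Fin.succ ⟨i, Nat.succ_lt_succ_iff.mp h⟩ := rfl
  rw [this, bmap, Fin.cons_succ]

lemma bperm_bijective (n : ℕ) :
    Function.Bijective (fun x : Fin (n+1) × Equiv.Perm (Fin n) => bperm x.1 x.2) := by
  rw [Fintype.bijective_iff_injective_and_card]
  constructor
  · rintro ⟨p, σ⟩ ⟨q, τ⟩ h
    simp only at h
    have hev : ∀ a, bperm p σ a = bperm q τ a := fun a => by rw [h]
    have hp : p = q := by
      have := hev ⟨0, Nat.succ_pos n⟩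
      rwa [bperm_zero p σ (Nat.succ_pos n), bperm_zero q τ (Nat.succ_pos n)] at this
    subst hp
    have hσ : σ = τ := by
      apply Equiv.ext
      intro i
      have := hev ⟨(i : ℕ) + 1, Nat.succ_lt_succ i.isLt⟩
      rw [bperm_succ, bperm_succ] at this
      have h2 := Fin.succAbove_right_injective this
      simpa [Fin.eta] using h2
    rw [hσ]
  · simp [Fintype.card_prod, Fintype.card_perm, Fintype.card_fin, Nat.factorial_succ]

lemma sum_bperm {n : ℕ} (F : Equiv.Perm (Fin (n+1)) → ℕ) :
    ∑ π : Equiv.Perm (Fin (n+1)), F π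
      = ∑ p : Fin (n+1), ∑ σ : Equiv.Perm (Fin n), F (bperm p σ) := by
  calc ∑ π : Equiv.Perm (Fin (n+1)), F π
      = ∑ x : Fin (n+1) × Equiv.Perm (Fin n), F (bperm x.1 x.2) :=
        (Fintype.sum_bijective _ (bperm_bijective n) _ _ (fun x => rfl)).symm
    _ = _ := Fintype.sum_prod_type _

/-! ### transfer of Asc/Desc along bperm -/

lemma asc_bperm_succ {n : ℕ} (p : Fin (n+1)) (σ : Equiv.Perm (Fin n)) (i : ℕ) :
    Asc (bperm p σ) (i+1) ↔ Asc σ i := by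
  unfold Asc
  constructor
  · rintro ⟨h, hlt⟩
    have h' : i + 1 < n := Nat.succ_lt_succ_iff.mp h
    refine ⟨h', ?_⟩
    rw [bperm_succ p σ i (Nat.lt_of_succ_lt h), bperm_succ p σ (i+1) h] at hlt
    have := Fin.succAbove_lt_succAbove_iff.mp hlt
    convert this using 2 <;> simp [Fin.ext_iff]
  · rintro ⟨h, hlt⟩
    have h2 : i + 1 + 1 < n + 1 := Nat.succ_lt_succ h
    refine ⟨h2, ?_⟩
    rw [bperm_succ p σ i (Nat.lt_of_succ_lt h2), bperm_succ p σ (i+1) h2]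
    apply Fin.succAbove_lt_succAbove_iff.mpr
    convert hlt using 2 <;> simp [Fin.ext_iff]

lemma desc_bperm_succ {n : ℕ} (p : Fin (n+1)) (σ : Equiv.Perm (Fin n)) (i : ℕ) :
    Desc (bperm p σ) (i+1) ↔ Desc σ i := by
  unfold Desc
  constructor
  · rintro ⟨h, hlt⟩
    have h' : i + 1 < n := Nat.succ_lt_succ_iff.mp h
    refine ⟨h', ?_⟩
    rw [bperm_succ p σ i (Nat.lt_of_succ_lt h), bperm_succ p σ (i+1) h] at hlt
    have := Fin.succAbove_lt_succAbove_iff.mp hlt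
    convert this using 2 <;> simp [Fin.ext_iff]
  · rintro ⟨h, hlt⟩
    have h2 : i + 1 + 1 < n + 1 := Nat.succ_lt_succ h
    refine ⟨h2, ?_⟩
    rw [bperm_succ p σ i (Nat.lt_of_succ_lt h2), bperm_succ p σ (i+1) h2]
    apply Fin.succAbove_lt_succAbove_iff.mpr
    convert hlt using 2 <;> simp [Fin.ext_iff]

lemma lt_succAbove_iff' {n : ℕ} (p : Fin (n+1)) (j : Fin n) :
    p < p.succAbove j ↔ (p : ℕ) ≤ (j : ℕ) := by
  rcases lt_or_ge (j : ℕ) (p : ℕ) with hc | hc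
  · rw [Fin.succAbove_of_castSucc_lt p j (by rw [Fin.lt_def, Fin.coe_castSucc]; omega)]
    constructor
    · intro hlt
      exfalso
      rw [Fin.lt_def, Fin.coe_castSucc] at hlt
      omega
    · intro hle; omega
  · rw [Fin.succAbove_of_le_castSucc p j (by rw [Fin.le_def, Fin.coe_castSucc]; omega)]
    constructor
    · intro _; exact hc
    · intro _
      rw [Fin.lt_def, Fin.val_succ]
      omega

lemma succAbove_lt_iff' {n : ℕ} (p : Fin (n+1)) (j : Fin n) :
    p.succAbove j < p ↔ (j : ℕ) < (p : ℕ) := by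
  have h1 := lt_succAbove_iff' p j
  have h2 : p.succAbove j ≠ p := Fin.succAbove_ne p j
  constructor
  · intro hlt
    by_contra hc
    push_neg at hc
    exact absurd (h1.mpr hc) (lt_asymm hlt)
  · intro hlt
    rcases lt_trichotomy (p.succAbove j) p with h | h | h
    · exact h
    · exact absurd h h2
    · have := h1.mp h; omega

lemma asc_bperm_zero {n : ℕ} (p : Fin (n+2)) (σ : Equiv.Perm (Fin (n+1))) :
    Asc (bperm p σ) 0 ↔ (p : ℕ) ≤ (σ 0 : ℕ) := by
  unfold Asc
  constructor
  · rintro ⟨h, hlt⟩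
    rw [bperm_zero p σ (Nat.lt_of_succ_lt h), bperm_succ p σ 0 h] at hlt
    have := (lt_succAbove_iff' p _).mp hlt
    simpa using this
  · intro hle
    refine ⟨Nat.succ_lt_succ (Nat.succ_pos n), ?_⟩
    rw [bperm_zero, bperm_succ]
    apply (lt_succAbove_iff' p _).mpr
    simpa using hle

lemma desc_bperm_zero {n : ℕ} (p : Fin (n+2)) (σ : Equiv.Perm (Fin (n+1))) :
    Desc (bperm p σ) 0 ↔ (σ 0 : ℕ) < (p : ℕ) := by
  unfold Desc
  constructor
  · rintro ⟨h, hlt⟩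
    rw [bperm_zero p σ (Nat.lt_of_succ_lt h), bperm_succ p σ 0 h] at hlt
    have := (succAbove_lt_iff' p _).mp hlt
    simpa using this
  · intro hle
    refine ⟨Nat.succ_lt_succ (Nat.succ_pos n), ?_⟩
    rw [bperm_zero, bperm_succ]
    apply (succAbove_lt_iff' p _).mpr
    simpa using hle

lemma nda_bperm {n : ℕ} (p : Fin (n+1)) (σ : Equiv.Perm (Fin n)) :
    NoDoubleAsc (bperm p σ)
      ↔ ¬ (Asc (bperm p σ) 0 ∧ Asc (bperm p σ) 1) ∧ NoDoubleAsc σ := by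
  constructor
  · intro h
    refine ⟨h 0, fun i hi => h (i+1) ?_⟩
    exact ⟨(asc_bperm_succ p σ i).mpr hi.1, (asc_bperm_succ p σ (i+1)).mpr hi.2⟩
  · rintro ⟨h0, h⟩ i hi
    match i with
    | 0 => exact h0 hi
    | (j+1) =>
      exact h j ⟨(asc_bperm_succ p σ j).mp hi.1, (asc_bperm_succ p σ (j+1)).mp hi.2⟩

lemma dd_bperm {n : ℕ} (p : Fin (n+2)) (σ : Equiv.Perm (Fin (n+1))) :
    dd (bperm p σ)
      = (if Desc (bperm p σ) 0 ∧ Desc (bperm p σ) 1 then 1 else 0) + dd σ := by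
  unfold dd
  rw [Finset.card_filter, Finset.card_filter, Finset.sum_range_succ']
  rw [add_comm]
  congr 1
  apply Finset.sum_congr rfl
  intro i _
  exact if_congr (and_congr (desc_bperm_succ p σ i) (desc_bperm_succ p σ (i+1))) rfl rfl

lemma Fw_bperm {n : ℕ} (p : Fin (n+3)) (σ : Equiv.Perm (Fin (n+2))) :
    Fw (bperm p σ)
      = (if (σ 0 : ℕ) < (p : ℕ) then (if Desc σ 0 then 2 else 1)
          else (if Asc σ 0 then 0 else 1)) * Fw σ := by
  have htot := asc_or_desc σ 0 (by omega)
  have hA1 : Asc (bperm p σ) 1 ↔ Asc σ 0 := asc_bperm_succ p σ 0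
  have hD1 : Desc (bperm p σ) 1 ↔ Desc σ 0 := desc_bperm_succ p σ 0
  unfold Fw
  by_cases hnda : NoDoubleAsc σ
  · rw [if_pos hnda]
    by_cases hc : (σ 0 : ℕ) < (p : ℕ)
    · -- descent at 0 of bperm
      have hd0 : Desc (bperm p σ) 0 := (desc_bperm_zero p σ).mpr hc
      have ha0 : ¬ Asc (bperm p σ) 0 := by
        intro h; exact absurd hd0 (asc_not_desc h)
      have hnda' : NoDoubleAsc (bperm p σ) := by
        rw [nda_bperm]
        exact ⟨fun hh => ha0 hh.1, hnda⟩
      rw [if_pos hnda', dd_bperm, if_pos hc]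
      by_cases hds : Desc σ 0
      · rw [if_pos (⟨hd0, hD1.mpr hds⟩ : _ ∧ _), if_pos hds]
        ring
      · rw [if_neg (fun hh : _ ∧ _ => hds (hD1.mp hh.2)), if_neg hds]
        ring
    · -- ascent at 0 of bperm
      have ha0 : Asc (bperm p σ) 0 := (asc_bperm_zero p σ).mpr (by omega)
      have hd0 : ¬ Desc (bperm p σ) 0 := asc_not_desc ha0
      rw [if_neg hc]
      by_cases has : Asc σ 0
      · have : ¬ NoDoubleAsc (bperm p σ) := by
          rw [nda_bperm]
          rintro ⟨h0, -⟩
          exact h0 ⟨ha0, hA1.mpr has⟩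
        rw [if_neg this, if_pos has]
        ring
      · have hnda' : NoDoubleAsc (bperm p σ) := by
          rw [nda_bperm]
          exact ⟨fun hh => has (hA1.mp hh.2), hnda⟩
        rw [if_pos hnda', dd_bperm, if_neg (fun hh : _ ∧ _ => hd0 hh.1), if_neg has]
        ring
  · have : ¬ NoDoubleAsc (bperm p σ) := by
      rw [nda_bperm]; rintro ⟨-, h⟩; exact hnda h
    rw [if_neg this, if_neg hnda, mul_zero]

/-! ### refined sums -/

noncomputable def S (n p : ℕ) : ℕ :=
  ∑ π : Equiv.Perm (Fin (n+2)), if (π 0 : ℕ) = p then Fw π else 0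

noncomputable def Hf (n p : ℕ) : ℕ :=
  ∑ π : Equiv.Perm (Fin (n+2)), if (π 0 : ℕ) = p ∧ Desc π 0 then Fw π else 0

noncomputable def Hcs (n : ℕ) : ℕ :=
  ∑ π : Equiv.Perm (Fin (n+2)), if Desc π 0 then Fw π else 0

lemma sum_range_S (n m : ℕ) (hm : n + 2 ≤ m) :
    ∑ r ∈ range m, S n r = ∑ π : Equiv.Perm (Fin (n+2)), Fw π := by
  unfold S
  rw [Finset.sum_comm]
  apply Finset.sum_congr rfl
  intro π _
  rw [Finset.sum_ite_eq (range m) ((π 0 : ℕ)) (fun _ => Fw π)]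
  exact if_pos (Finset.mem_range.mpr (lt_of_lt_of_le (π 0).isLt hm))

lemma sum_range_S_lt (n p : ℕ) :
    ∑ r ∈ range p, S n r
      = ∑ π : Equiv.Perm (Fin (n+2)), if (π 0 : ℕ) < p then Fw π else 0 := by
  unfold S
  rw [Finset.sum_comm]
  apply Finset.sum_congr rfl
  intro π _
  rw [Finset.sum_ite_eq (range p) ((π 0 : ℕ)) (fun _ => Fw π)]
  simp [Finset.mem_range]

lemma sum_range_Hf_lt (n p : ℕ) :
    ∑ r ∈ range p, Hf n r
      = ∑ π : Equiv.Perm (Fin (n+2)), if (π 0 : ℕ) < p ∧ Desc π 0 then Fw π else 0 := by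
  unfold Hf
  rw [Finset.sum_comm]
  apply Finset.sum_congr rfl
  intro π _
  by_cases hd : Desc π 0
  · simp only [hd, and_true]
    rw [Finset.sum_ite_eq (range p) ((π 0 : ℕ)) (fun _ => Fw π)]
    simp [Finset.mem_range]
  · simp [hd]

lemma alpha_eq_sum_S (n : ℕ) : alpha (n+2) = ∑ p ∈ range (n+2), S n p := by
  rw [sum_range_S n (n+2) le_rfl]
  unfold alpha Fw
  rw [Finset.sum_filter]

lemma Hcs_eq_sum_Hf (n : ℕ) : Hcs n = ∑ p ∈ range (n+2), Hf n p := by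
  unfold Hcs
  rw [sum_range_Hf_lt]
  apply Finset.sum_congr rfl
  intro π _
  exact if_congr (Iff.intro (fun hd => ⟨(π 0).isLt, hd⟩) (fun h => h.2)) rfl rfl

/-! ### the two recurrences -/

lemma S_rec (n p : ℕ) (hp : p < n + 3) :
    S (n+1) p = Hcs n + ∑ r ∈ range p, S n r := by
  have e1 : S (n+1) p = ∑ σ : Equiv.Perm (Fin (n+2)), Fw (bperm ⟨p, hp⟩ σ) := by
    show (∑ π : Equiv.Perm (Fin (n+3)), if (π 0 : ℕ) = p then Fw π else 0) = _
    rw [sum_bperm (fun π => if (π 0 : ℕ) = p then Fw π else 0)]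
    have step1 : ∀ q : Fin (n+3),
        (∑ σ : Equiv.Perm (Fin (n+2)),
          if ((bperm q σ) 0 : ℕ) = p then Fw (bperm q σ) else 0)
        = if q = ⟨p, hp⟩ then (∑ σ : Equiv.Perm (Fin (n+2)), Fw (bperm q σ)) else 0 := by
      intro q
      have h0 : ∀ σ : Equiv.Perm (Fin (n+2)), (bperm q σ) 0 = q := by
        intro σ; exact bperm_zero q σ (Nat.succ_pos _)
      have hq2 : ((q : ℕ) = p) ↔ (q = ⟨p, hp⟩) := by simp [Fin.ext_iff]
      by_cases hq : q = (⟨p, hp⟩ : Fin (n+3))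
      · rw [if_pos hq]
        apply Finset.sum_congr rfl
        intro σ _
        rw [h0 σ, if_pos (hq2.mpr hq)]
      · rw [if_neg hq]
        apply Finset.sum_eq_zero
        intro σ _
        rw [h0 σ, if_neg (fun hh => hq (hq2.mp hh))]
    rw [Finset.sum_congr rfl (fun q _ => step1 q)]
    rw [Finset.sum_ite_eq' Finset.univ (⟨p, hp⟩ : Fin (n+3)) _]
    rw [if_pos (Finset.mem_univ _)]
  rw [e1, sum_range_S_lt n p]
  unfold Hcs
  rw [← Finset.sum_add_distrib]
  apply Finset.sum_congr rfl
  intro σ _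
  rw [Fw_bperm ⟨p, hp⟩ σ]
  have htot := asc_or_desc σ 0 (by omega)
  by_cases hc : (σ 0 : ℕ) < p
  · rw [if_pos hc, if_pos hc]
    by_cases hd : Desc σ 0
    · rw [if_pos hd, if_pos hd]; ring
    · rw [if_neg hd, if_neg hd]; ring
  · rw [if_neg hc, if_neg hc]
    by_cases ha : Asc σ 0
    · have hd : ¬ Desc σ 0 := asc_not_desc ha
      rw [if_pos ha, if_neg hd]; ring
    · have hd : Desc σ 0 := htot.resolve_left ha
      rw [if_neg ha, if_pos hd]; ring

lemma Hf_rec (n p : ℕ) (hp : p < n + 3) :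
    Hf (n+1) p = ∑ r ∈ range p, (S n r + Hf n r) := by
  have e1 : Hf (n+1) p = ∑ σ : Equiv.Perm (Fin (n+2)),
      if Desc (bperm (⟨p, hp⟩ : Fin (n+3)) σ) 0 then Fw (bperm ⟨p, hp⟩ σ) else 0 := by
    show (∑ π : Equiv.Perm (Fin (n+3)), if ((π 0 : ℕ) = p ∧ Desc π 0) then Fw π else 0) = _
    rw [sum_bperm (fun π => if ((π 0 : ℕ) = p ∧ Desc π 0) then Fw π else 0)]
    have step1 : ∀ q : Fin (n+3),
        (∑ σ : Equiv.Perm (Fin (n+2)),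
          if (((bperm q σ) 0 : ℕ) = p ∧ Desc (bperm q σ) 0) then Fw (bperm q σ) else 0)
        = if q = ⟨p, hp⟩ then
            (∑ σ : Equiv.Perm (Fin (n+2)),
              if Desc (bperm q σ) 0 then Fw (bperm q σ) else 0) else 0 := by
      intro q
      have h0 : ∀ σ : Equiv.Perm (Fin (n+2)), (bperm q σ) 0 = q := by
        intro σ; exact bperm_zero q σ (Nat.succ_pos _)
      have hq2 : ((q : ℕ) = p) ↔ (q = ⟨p, hp⟩) := by simp [Fin.ext_iff]
      by_cases hq : q = (⟨p, hp⟩ : Fin (n+3))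
      · rw [if_pos hq]
        apply Finset.sum_congr rfl
        intro σ _
        rw [h0 σ]
        exact if_congr (by rw [hq2]; tauto) rfl rfl
      · rw [if_neg hq]
        apply Finset.sum_eq_zero
        intro σ _
        rw [if_neg]
        rintro ⟨h1, -⟩
        rw [h0 σ] at h1
        exact hq (hq2.mp h1)
    rw [Finset.sum_congr rfl (fun q _ => step1 q)]
    rw [Finset.sum_ite_eq' Finset.univ (⟨p, hp⟩ : Fin (n+3)) _]
    rw [if_pos (Finset.mem_univ _)]
  rw [e1, Finset.sum_add_distrib, sum_range_S_lt n p, sum_range_Hf_lt n p,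
    ← Finset.sum_add_distrib]
  apply Finset.sum_congr rfl
  intro σ _
  rw [Fw_bperm ⟨p, hp⟩ σ]
  have hdz := desc_bperm_zero (⟨p, hp⟩ : Fin (n+3)) σ
  by_cases hc : (σ 0 : ℕ) < p
  · rw [if_pos (hdz.mpr hc), if_pos hc, if_pos hc]
    by_cases hd : Desc σ 0
    · rw [if_pos hd, if_pos (⟨hc, hd⟩ : _ ∧ _)]; ring
    · rw [if_neg hd, if_neg (fun hh : _ ∧ _ => hd hh.2)]; ring
  · rw [if_neg (fun hh => hc (hdz.mp hh)), if_neg hc, if_neg (fun hh : _ ∧ _ => hc hh.1)]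

/-! ### base case: permutations of Fin 2 -/

lemma Fw_two (π : Equiv.Perm (Fin 2)) : Fw π = 1 := by
  have hnda : NoDoubleAsc π := by
    rintro i ⟨-, ⟨hb, -⟩⟩
    omega
  have hdd : dd π = 0 := by
    unfold dd
    rw [Finset.card_eq_zero, Finset.filter_eq_empty_iff]
    rintro i - ⟨-, ⟨hb, -⟩⟩
    omega
  unfold Fw
  rw [if_pos hnda, hdd]
  exact pow_zero 2

lemma sum_perm_one (F : Equiv.Perm (Fin 1) → ℕ) :
    ∑ σ : Equiv.Perm (Fin 1), F σ = F 1 := by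
  have : (Finset.univ : Finset (Equiv.Perm (Fin 1))) = {1} := by
    apply Finset.eq_singleton_iff_unique_mem.mpr
    refine ⟨Finset.mem_univ _, fun σ _ => ?_⟩
    apply Equiv.ext
    intro i
    have h1 := (σ i).isLt
    have h2 := i.isLt
    apply Fin.ext
    omega
  rw [this, Finset.sum_singleton]

lemma S_zero (p : ℕ) (hp : p < 2) : S 0 p = 1 := by
  show (∑ π : Equiv.Perm (Fin 2), if (π 0 : ℕ) = p then Fw π else 0) = 1
  rw [sum_bperm (fun π => if (π 0 : ℕ) = p then Fw π else 0)]
  have : ∀ q : Fin 2, (∑ σ : Equiv.Perm (Fin 1),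
      if ((bperm q σ) 0 : ℕ) = p then Fw (bperm q σ) else 0)
      = if (q : ℕ) = p then 1 else 0 := by
    intro q
    rw [sum_perm_one (fun σ => if ((bperm q σ) 0 : ℕ) = p then Fw (bperm q σ) else 0)]
    have h0 : (bperm q 1) 0 = q := bperm_zero q 1 (by omega)
    rw [h0, Fw_two]
  rw [Finset.sum_congr rfl (fun q _ => this q)]
  rw [Fin.sum_univ_two]
  interval_cases p <;> simp

lemma Hf_zero (p : ℕ) (hp : p < 2) : Hf 0 p = p := by
  show (∑ π : Equiv.Perm (Fin 2), if ((π 0 : ℕ) = p ∧ Desc π 0) then Fw π else 0) = p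
  rw [sum_bperm (fun π => if ((π 0 : ℕ) = p ∧ Desc π 0) then Fw π else 0)]
  have : ∀ q : Fin 2, (∑ σ : Equiv.Perm (Fin 1),
      if (((bperm q σ) 0 : ℕ) = p ∧ Desc (bperm q σ) 0) then Fw (bperm q σ) else 0)
      = if ((q : ℕ) = p ∧ 0 < (q : ℕ)) then 1 else 0 := by
    intro q
    rw [sum_perm_one (fun σ => if (((bperm q σ) 0 : ℕ) = p ∧ Desc (bperm q σ) 0)
      then Fw (bperm q σ) else 0)]
    rw [Fw_two]
    apply if_congr _ rfl rfl
    have h0 : (bperm q 1) 0 = q := bperm_zero q 1 (by omega)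
    rw [h0]
    apply and_congr Iff.rfl
    rw [desc_bperm_zero q 1]
    have : ((1 : Equiv.Perm (Fin 1)) 0 : ℕ) = 0 := by
      have := ((1 : Equiv.Perm (Fin 1)) 0).isLt
      omega
    rw [this]
  rw [Finset.sum_congr rfl (fun q _ => this q)]
  rw [Fin.sum_univ_two]
  interval_cases p <;> simp

/-! ### solving the recurrence: closed forms -/

noncomputable def u : ℕ → ℕ
  | 0 => 1
  | (m+1) => Hcs m

lemma hockey (m k : ℕ) : ∑ r ∈ range m, r.choose k = m.choose (k+1) := by
  induction m with
  | zero => simp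
  | succ m ih =>
    rw [Finset.sum_range_succ, ih, Nat.choose_succ_succ]
    simp only [Nat.succ_eq_add_one]
    omega

lemma CF (n : ℕ) :
    (∀ p, p ≤ n+1 → Hf n p = (∑ k ∈ range (n+1), k * u (n-k) * p.choose k) + p.choose (n+1))
    ∧ (∀ p, p ≤ n+1 → S n p = ∑ k ∈ range (n+1), u (n-k) * p.choose k) := by
  induction n with
  | zero =>
    constructor
    · intro p hp
      rw [Hf_zero p (by omega)]
      simp
    · intro p hp
      rw [S_zero p (by omega)]
      simp [u]
  | succ n ih =>
    obtain ⟨ihH, ihS⟩ := ih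
    have key : ∀ p, p ≤ n + 2 →
        ∑ r ∈ range p, S n r = ∑ k ∈ range (n+1), u (n-k) * p.choose (k+1) := by
      intro p hp
      have hr : ∀ r ∈ range p, S n r = ∑ k ∈ range (n+1), u (n-k) * r.choose k := by
        intro r hrp
        rw [Finset.mem_range] at hrp
        exact ihS r (by omega)
      rw [Finset.sum_congr rfl hr, Finset.sum_comm]
      apply Finset.sum_congr rfl
      intro k _
      rw [← Finset.mul_sum, hockey]
    have keyH : ∀ p, p ≤ n + 2 →
        ∑ r ∈ range p, Hf n r
          = (∑ k ∈ range (n+1), k * u (n-k) * p.choose (k+1)) + p.choose (n+2) := by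
      intro p hp
      have hr : ∀ r ∈ range p, Hf n r
          = (∑ k ∈ range (n+1), k * u (n-k) * r.choose k) + r.choose (n+1) := by
        intro r hrp
        rw [Finset.mem_range] at hrp
        exact ihH r (by omega)
      rw [Finset.sum_congr rfl hr, Finset.sum_add_distrib, hockey, Finset.sum_comm]
      congr 1
      apply Finset.sum_congr rfl
      intro k _
      rw [← Finset.mul_sum, hockey]
    constructor
    · intro p hp
      rw [Hf_rec n p (by omega), Finset.sum_add_distrib, key p hp, keyH p hp]
      have ek : ∑ k ∈ range (n+1), (k+1) * u (n+1-(k+1)) * p.choose (k+1)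
          = ∑ k ∈ range (n+1), (k * u (n-k) * p.choose (k+1) + u (n-k) * p.choose (k+1)) := by
        apply Finset.sum_congr rfl
        intro k _
        rw [Nat.succ_sub_succ]
        ring
      conv_rhs => rw [Finset.sum_range_succ']
      rw [ek, Finset.sum_add_distrib]
      ring
    · intro p hp
      rw [S_rec n p (by omega), key p hp]
      have ek : ∑ k ∈ range (n+1), u (n+1-(k+1)) * p.choose (k+1)
          = ∑ k ∈ range (n+1), u (n-k) * p.choose (k+1) := by
        apply Finset.sum_congr rfl
        intro k _
        rw [Nat.succ_sub_succ]
      conv_rhs => rw [Finset.sum_range_succ']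
      rw [ek]
      have e0 : u (n+1-0) * p.choose 0 = Hcs n := by simp [u]
      rw [e0]
      ring

lemma V_rec (n : ℕ) :
    u (n+1) = (∑ k ∈ range (n+1), k * u (n-k) * (n+2).choose (k+1)) + 1 := by
  show Hcs n = _
  rw [Hcs_eq_sum_Hf n]
  have hr : ∀ p ∈ range (n+2), Hf n p
      = (∑ k ∈ range (n+1), k * u (n-k) * p.choose k) + p.choose (n+1) := by
    intro p hp
    rw [Finset.mem_range] at hp
    exact (CF n).1 p (by omega)
  rw [Finset.sum_congr rfl hr, Finset.sum_add_distrib, hockey, Finset.sum_comm]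
  congr 1
  · apply Finset.sum_congr rfl
    intro k _
    rw [← Finset.mul_sum, hockey]
  · exact Nat.choose_self (n+2)

lemma alpha_formula (n : ℕ) :
    alpha (n+2) = ∑ k ∈ range (n+1), u (n-k) * (n+2).choose (k+1) := by
  rw [alpha_eq_sum_S n]
  have hr : ∀ p ∈ range (n+2), S n p = ∑ k ∈ range (n+1), u (n-k) * p.choose k := by
    intro p hp
    rw [Finset.mem_range] at hp
    exact (CF n).2 p (by omega)
  rw [Finset.sum_congr rfl hr, Finset.sum_comm]
  apply Finset.sum_congr rfl
  intro k _
  rw [← Finset.mul_sum, hockey]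

lemma alpha_star (n : ℕ) :
    alpha (n+3) + u (n+2) = (n+3) * (alpha (n+2) + u (n+1)) + 1 := by
  have h1 : alpha (n+3) = ∑ k ∈ range (n+2), u (n+1-k) * (n+3).choose (k+1) :=
    alpha_formula (n+1)
  have h2 : u (n+2) = (∑ k ∈ range (n+2), k * u (n+1-k) * (n+3).choose (k+1)) + 1 :=
    V_rec (n+1)
  have h3 : alpha (n+3) + u (n+2)
      = (∑ k ∈ range (n+2), (k+1) * u (n+1-k) * (n+3).choose (k+1)) + 1 := by
    rw [h1, h2, ← add_assoc, ← Finset.sum_add_distrib]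
    congr 1
    apply Finset.sum_congr rfl
    intro k _
    ring
  rw [h3, Finset.sum_range_succ']
  have e0 : (0+1) * u (n+1-0) * (n+3).choose (0+1) = (n+3) * u (n+1) := by
    rw [Nat.sub_zero, Nat.choose_one_right]
    ring
  have ek : ∀ k, (k+1+1) * u (n+1-(k+1)) * (n+3).choose (k+1+1)
      = (n+3) * (u (n-k) * (n+2).choose (k+1)) := by
    intro k
    rw [Nat.succ_sub_succ]
    have : (n+3) * (n+2).choose (k+1) = (n+3).choose (k+2) * (k+2) := by
      have := Nat.add_one_mul_choose_eq (n+2) (k+1)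
      simpa [Nat.succ_eq_add_one] using this
    calc (k+1+1) * u (n-k) * (n+3).choose (k+1+1)
        = u (n-k) * ((n+3).choose (k+2) * (k+2)) := by ring
      _ = u (n-k) * ((n+3) * (n+2).choose (k+1)) := by rw [← this]
      _ = (n+3) * (u (n-k) * (n+2).choose (k+1)) := by ring
  rw [Finset.sum_congr rfl (fun k _ => ek k), e0, ← Finset.mul_sum, alpha_formula n]
  ring

/-! ### real layer: solving for u -/

noncomputable def Er (m : ℕ) : ℝ := ∑ i ∈ range m, (-1)^i / (i+1).factorial

lemma Er_succ (m : ℕ) : Er (m+1) = Er m + (-1)^m / (m+1).factorial :=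
  Finset.sum_range_succ _ m

lemma Er_one : Er 1 = 1 := by
  unfold Er
  simp

lemma A1 (M : ℕ) (hM : 1 ≤ M) :
    ∑ j ∈ range (M+1), (-1:ℝ)^j * (M.choose j) = 0 := by
  have h := Int.alternating_sum_range_choose (n := M)
  rw [if_neg (by omega)] at h
  have : ((∑ i ∈ range (M+1), (-1:ℤ)^i * (M.choose i) : ℤ) : ℝ) = 0 := by
    rw [h]; norm_num
  rw [← this]
  push_cast
  rfl

lemma A2 (K : ℕ) (hK : 1 ≤ K) :
    ∑ j ∈ range (K+2), (-1:ℝ)^j * j * ((K+1).choose j) = 0 := by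
  rw [Finset.sum_range_succ']
  have e : ∀ i : ℕ, (-1:ℝ)^(i+1) * ((i+1 : ℕ) : ℝ) * ((K+1).choose (i+1))
      = -((K+1) * ((-1:ℝ)^i * (K.choose i))) := by
    intro i
    have h := Nat.add_one_mul_choose_eq K i
    have h' : ((K:ℝ) + 1) * (K.choose i) = ((K+1).choose (i+1) : ℕ) * ((i:ℝ) + 1) := by
      exact_mod_cast congrArg (Nat.cast : ℕ → ℝ) h
    calc (-1:ℝ)^(i+1) * ((i+1 : ℕ) : ℝ) * ((K+1).choose (i+1))
        = -((-1:ℝ)^i * ((((K+1).choose (i+1) : ℕ) : ℝ) * ((i:ℝ)+1))) := by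
          rw [pow_succ]
          push_cast
          ring
      _ = -((-1:ℝ)^i * (((K:ℝ)+1) * (K.choose i))) := by rw [← h']
      _ = -(((K:ℝ)+1) * ((-1:ℝ)^i * (K.choose i))) := by ring
  rw [Finset.sum_congr rfl (fun i _ => e i)]
  have : ∑ i ∈ range (K+1), -(((K:ℝ)+1) * ((-1:ℝ)^i * (K.choose i)))
      = -(((K:ℝ)+1) * ∑ i ∈ range (K+1), (-1:ℝ)^i * (K.choose i)) := by
    rw [Finset.mul_sum, ← Finset.sum_neg_distrib]
  rw [this, A1 K hK]
  simp

lemma KX (m : ℕ) :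
    ∑ k ∈ range (m+1), ((k:ℝ)) * (-1)^k * ((m+3).choose (k+1))
      = -1 + (-1)^m * (m^2+3*m+1) := by
  have hfull : ∑ j ∈ range (m+4), (-1:ℝ)^j * ((j:ℝ) - 1) * ((m+3).choose j) = 0 := by
    have h2 := A2 (m+2) (by omega)
    have h1 := A1 (m+3) (by omega)
    have : ∑ j ∈ range (m+4), (-1:ℝ)^j * ((j:ℝ) - 1) * ((m+3).choose j)
        = (∑ j ∈ range (m+4), (-1:ℝ)^j * j * ((m+3).choose j))
          - ∑ j ∈ range (m+4), (-1:ℝ)^j * ((m+3).choose j) := by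
      rw [← Finset.sum_sub_distrib]
      apply Finset.sum_congr rfl
      intro j _
      ring
    rw [this]
    have e2 : ∑ j ∈ range (m+4), (-1:ℝ)^j * j * ((m+3).choose j) = 0 := by
      have : m + 4 = (m+2) + 2 := by omega
      rw [this]
      have : m + 3 = (m+2) + 1 := by omega
      rw [this]
      exact h2
    rw [e2, h1]
    ring
  rw [Finset.sum_range_succ, Finset.sum_range_succ, Finset.sum_range_succ'] at hfull
  have c1 : (m+3).choose (m+3) = 1 := Nat.choose_self _
  have c2 : (m+3).choose (m+2) = m+3 := Nat.choose_succ_self_right _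
  rw [c1, c2] at hfull
  have hx : ∑ k ∈ range (m+1), (-1:ℝ)^(k+1) * (((k+1 : ℕ):ℝ) - 1) * ((m+3).choose (k+1))
      = -∑ k ∈ range (m+1), ((k:ℝ)) * (-1)^k * ((m+3).choose (k+1)) := by
    rw [← Finset.sum_neg_distrib]
    apply Finset.sum_congr rfl
    intro i _
    rw [pow_succ]
    push_cast
    ring
  rw [hx] at hfull
  have c0 : (m+3).choose 0 = 1 := Nat.choose_zero_right _
  rw [c0] at hfull
  have hm2 : (-1:ℝ)^(m+2) = (-1)^m := by
    rw [pow_add]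
    norm_num
  have hm3 : (-1:ℝ)^(m+3) = -(-1)^m := by
    have : m + 3 = (m+2) + 1 := rfl
    rw [this, pow_succ, hm2]
    ring
  rw [hm2, hm3] at hfull
  push_cast at hfull ⊢
  nlinarith [hfull]

lemma fact_ne (j : ℕ) : ((j.factorial : ℝ)) ≠ 0 :=
  Nat.cast_ne_zero.mpr (Nat.factorial_ne_zero _)

lemma Jp : ∀ m : ℕ, Er (m+2)
    = 1/((m+2).factorial : ℝ)
      + ∑ k ∈ range (m+1), ((k:ℝ)/((k+1).factorial : ℝ)) * Er (m+1-k) := by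
  intro m
  induction m with
  | zero =>
    show Er 2 = 1/((2).factorial : ℝ) + _
    rw [Finset.sum_range_one]
    unfold Er
    rw [Finset.sum_range_succ, Finset.sum_range_one]
    norm_num
  | succ m ih =>
    show Er (m+3) = 1/((m+3).factorial : ℝ)
      + ∑ k ∈ range (m+2), ((k:ℝ)/((k+1).factorial : ℝ)) * Er (m+2-k)
    have hK : ∑ k ∈ range (m+1),
        ((k:ℝ)/((k+1).factorial : ℝ)) * ((-1:ℝ)^(m+1-k) / ((m+2-k).factorial : ℝ))
        = ((-1:ℝ)^(m+1) * (-1 + (-1)^m * ((m:ℝ)^2+3*m+1))) / ((m+3).factorial : ℝ) := by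
      have hpt : ∀ k ∈ range (m+1),
          ((k:ℝ)/((k+1).factorial : ℝ)) * ((-1:ℝ)^(m+1-k) / ((m+2-k).factorial : ℝ))
          = ((-1:ℝ)^(m+1) / ((m+3).factorial : ℝ))
            * (((k:ℝ)) * (-1)^k * ((m+3).choose (k+1))) := by
        intro k hk
        rw [Finset.mem_range] at hk
        have hkk : (-1:ℝ)^k * (-1)^k = 1 := by
          rw [← pow_add, ← two_mul, pow_mul]
          norm_num
        have hpow : (-1:ℝ)^(m+1-k) = (-1)^(m+1) * (-1)^k := by
          calc (-1:ℝ)^(m+1-k) = (-1:ℝ)^(m+1-k) * ((-1:ℝ)^k * (-1)^k) := by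
                rw [hkk, mul_one]
            _ = ((-1:ℝ)^(m+1-k) * (-1)^k) * (-1)^k := by ring
            _ = (-1:ℝ)^(m+1) * (-1)^k := by
                rw [← pow_add]
                congr 2
                omega
        have hcf := Nat.choose_mul_factorial_mul_factorial (show k+1 ≤ m+3 by omega)
        have hm23 : m + 3 - (k+1) = m + 2 - k := by omega
        rw [hm23] at hcf
        have hcfr : (((m+3).choose (k+1) : ℝ)) * ((k+1).factorial : ℝ) * ((m+2-k).factorial : ℝ)
            = ((m+3).factorial : ℝ) := by
          exact_mod_cast congrArg (Nat.cast : ℕ → ℝ) hcf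
        rw [hpow, ← hcfr]
        have hcne : (((m+3).choose (k+1) : ℕ) : ℝ) ≠ 0 := by
          have := Nat.choose_pos (show k+1 ≤ m+3 by omega)
          positivity
        field_simp
      rw [Finset.sum_congr rfl hpt, ← Finset.mul_sum, KX m]
      ring
    rw [Finset.sum_range_succ]
    have eEnd : (((m+1:ℕ)):ℝ)/(((m+1)+1).factorial : ℝ) * Er ((m+2) - (m+1))
        = ((m:ℝ)+1)/((m+2).factorial : ℝ) := by
      have h1 : (m+2) - (m+1) = 1 := by omega
      rw [h1, Er_one]
      push_cast
      ring
    have hsplit : ∀ k ∈ range (m+1), ((k:ℝ)/((k+1).factorial:ℝ)) * Er (m+2-k)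
        = ((k:ℝ)/((k+1).factorial:ℝ)) * Er (m+1-k)
          + ((k:ℝ)/((k+1).factorial:ℝ)) * ((-1:ℝ)^(m+1-k) / ((m+2-k).factorial : ℝ)) := by
      intro k hk
      rw [Finset.mem_range] at hk
      have h1 : m + 2 - k = (m+1-k) + 1 := by omega
      rw [h1, Er_succ]
      rw [← h1]
      ring
    rw [Finset.sum_congr rfl hsplit, Finset.sum_add_distrib, hK, eEnd]
    have ihs : ∑ k ∈ range (m+1), ((k:ℝ)/((k+1).factorial : ℝ)) * Er (m+1-k)
        = Er (m+2) - 1/((m+2).factorial : ℝ) := by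
      rw [ih]
      ring
    rw [ihs, Er_succ (m+2)]
    have hfac : ((m+3).factorial : ℝ) = ((m:ℝ)+3) * ((m+2).factorial:ℝ) := by
      have : (m+3).factorial = (m+3) * (m+2).factorial := Nat.factorial_succ (m+2)
      rw [this]
      push_cast
      ring
    have hx1 : (-1:ℝ)^(m+2) = (-1:ℝ)^m := by
      rw [pow_add]
      norm_num
    have hx2 : (-1:ℝ)^(m+1) = -((-1:ℝ)^m) := by
      rw [pow_succ]
      ring
    rw [hfac, hx1, hx2]
    rcases Nat.even_or_odd m with he | ho
    · rw [he.neg_one_pow]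
      field_simp
      ring
    · rw [ho.neg_one_pow]
      field_simp
      ring

lemma uE : ∀ m : ℕ, (u m : ℝ) = ((m+1).factorial : ℝ) * Er (m+1) := by
  intro m
  induction m using Nat.strong_induction_on with
  | _ m ih =>
    match m with
    | 0 =>
      rw [show u 0 = 1 from rfl, show (0:ℕ)+1 = 1 from rfl, Er_one]
      norm_num
    | (m+1) =>
      have hV := V_rec m
      have hVr : ((u (m+1) : ℕ) : ℝ)
          = (∑ k ∈ range (m+1), ((k:ℕ):ℝ) * (u (m-k) : ℝ) * (((m+2).choose (k+1) : ℕ) : ℝ)) + 1 := by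
        rw [hV]
        push_cast
        rfl
      rw [hVr]
      have hpt : ∀ k ∈ range (m+1), ((k:ℕ):ℝ) * (u (m-k) : ℝ) * (((m+2).choose (k+1) : ℕ) : ℝ)
          = ((m+2).factorial : ℝ) * (((k:ℝ)/((k+1).factorial : ℝ)) * Er (m+1-k)) := by
        intro k hk
        rw [Finset.mem_range] at hk
        rw [ih (m-k) (by omega)]
        have h1 : m - k + 1 = m + 1 - k := by omega
        rw [h1]
        have hcf := Nat.choose_mul_factorial_mul_factorial (show k+1 ≤ m+2 by omega)
        have hm2 : m + 2 - (k+1) = m + 1 - k := by omega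
        rw [hm2] at hcf
        have hcfr : (((m+2).choose (k+1) : ℕ) : ℝ) * ((k+1).factorial : ℝ) * ((m+1-k).factorial : ℝ)
            = ((m+2).factorial : ℝ) := by
          exact_mod_cast congrArg (Nat.cast : ℕ → ℝ) hcf
        rw [← hcfr]
        field_simp
      rw [Finset.sum_congr rfl hpt, ← Finset.mul_sum]
      have hJ := Jp m
      have : ∑ k ∈ range (m+1), ((k:ℝ)/((k+1).factorial : ℝ)) * Er (m+1-k)
          = Er (m+2) - 1/((m+2).factorial : ℝ) := by
        rw [hJ]
        ring
      rw [this]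
      have hf : ((m+2).factorial : ℝ) ≠ 0 := fact_ne _
      field_simp
      ring

lemma u_rec_real (n : ℕ) :
    (u (n+2) : ℝ) = ((n:ℝ)+3) * (u (n+1) : ℝ) + (-1)^n := by
  rw [uE (n+2), uE (n+1)]
  have h1 : Er (n+3) = Er (n+2) + (-1:ℝ)^(n+2) / ((n+3).factorial : ℝ) := Er_succ (n+2)
  have hfac : ((n+3).factorial : ℝ) = ((n:ℝ)+3) * ((n+2).factorial:ℝ) := by
    have : (n+3).factorial = (n+3) * (n+2).factorial := Nat.factorial_succ (n+2)
    rw [this]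
    push_cast
    ring
  have hx : (-1:ℝ)^(n+2) = (-1:ℝ)^n := by
    rw [pow_add]
    norm_num
  show ((n+3).factorial : ℝ) * Er (n+3) = _
  rw [h1, hfac, hx]
  have hf : ((n+2).factorial : ℝ) ≠ 0 := fact_ne _
  field_simp

lemma alpha_two : alpha 2 = 2 := by
  rw [alpha_eq_sum_S 0]
  rw [Finset.sum_range_succ, Finset.sum_range_one, S_zero 0 (by omega), S_zero 1 (by omega)]

lemma alpha_rec_real (n : ℕ) :
    (alpha (n+3) : ℝ) = ((n:ℝ)+3) * (alpha (n+2) : ℝ) + 1 - (-1)^n := by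
  have h := alpha_star n
  have hr : ((alpha (n+3) : ℕ) : ℝ) + (u (n+2) : ℝ)
      = ((n:ℝ)+3) * ((alpha (n+2) : ℝ) + (u (n+1) : ℝ)) + 1 := by
    exact_mod_cast congrArg (Nat.cast : ℕ → ℝ) h
  rw [u_rec_real n] at hr
  linarith [hr]

noncomputable def g (i : ℕ) : ℝ := if i = 0 then 0 else (1 + (-1)^i) / (i.factorial : ℝ)

lemma alpha_closed : ∀ n : ℕ,
    (alpha (n+2) : ℝ) = ((n+2).factorial : ℝ) * ∑ i ∈ range (n+3), g i := by
  intro n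
  induction n with
  | zero =>
    rw [alpha_two]
    rw [Finset.sum_range_succ, Finset.sum_range_succ, Finset.sum_range_one]
    unfold g
    norm_num
  | succ n ih =>
    show (alpha (n+3) : ℝ) = ((n+3).factorial : ℝ) * ∑ i ∈ range (n+4), g i
    rw [alpha_rec_real n, ih]
    have hfac : ((n+3).factorial : ℝ) = ((n:ℝ)+3) * ((n+2).factorial:ℝ) := by
      have : (n+3).factorial = (n+3) * (n+2).factorial := Nat.factorial_succ (n+2)
      rw [this]
      push_cast
      ring
    have hg : ((n+3).factorial : ℝ) * g (n+3) = 1 - (-1:ℝ)^n := by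
      unfold g
      rw [if_neg (by omega)]
      have hf : ((n+3).factorial : ℝ) ≠ 0 := fact_ne _
      have hx : (-1:ℝ)^(n+3) = -(-1:ℝ)^n := by
        rw [pow_add]
        norm_num
      rw [hx]
      field_simp
      ring
    conv_rhs => rw [Finset.sum_range_succ]
    rw [mul_add, hg, hfac]
    ring

noncomputable def cseq (N : ℕ) : ℝ := ∑ i ∈ range (N+1), g i

lemma g_nonneg (i : ℕ) : 0 ≤ g i := by
  unfold g
  split
  · exact le_refl 0
  · rcases Nat.even_or_odd i with he | ho
    · rw [he.neg_one_pow]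
      positivity
    · rw [ho.neg_one_pow]
      norm_num

lemma g_le (i : ℕ) : g i ≤ 2 / (i.factorial : ℝ) := by
  unfold g
  split
  · positivity
  · rcases Nat.even_or_odd i with he | ho
    · rw [he.neg_one_pow]
      norm_num
    · rw [ho.neg_one_pow]
      have : (0:ℝ) < (i.factorial : ℝ) := by
        have := Nat.factorial_pos i
        exact_mod_cast this
      rw [div_le_div_iff₀ this this]
      nlinarith [this]

set_option maxHeartbeats 1000000 in
/-- The exponential generating function F(z) = Σ_{n≥2} α_n z^n/n! equals
(e^z − 2 + e^{−z})/(1−z) for |z| < 1. -/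
theorem egf_alpha (z : ℝ) (hz : |z| < 1) :
    ∑' n : ℕ, (alpha (n + 2) : ℝ) * z ^ (n + 2) / (n + 2).factorial
      = (Real.exp z - 2 + Real.exp (-z)) / (1 - z) := by
  have habs : ∀ i : ℕ, |g i * z ^ i| ≤ 2 * (|z| ^ i / (i.factorial : ℝ)) := by
    intro i
    rw [abs_mul, abs_pow]
    have h1 : |g i| = g i := abs_of_nonneg (g_nonneg i)
    rw [h1]
    have h2 : (0:ℝ) ≤ |z| ^ i := by positivity
    calc g i * |z| ^ i ≤ (2 / (i.factorial : ℝ)) * |z| ^ i := by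
          apply mul_le_mul_of_nonneg_right (g_le i) h2
      _ = 2 * (|z| ^ i / (i.factorial : ℝ)) := by ring
  have hsum_gz : Summable (fun i : ℕ => ‖g i * z ^ i‖) := by
    apply Summable.of_nonneg_of_le (fun i => norm_nonneg _) (fun i => habs i)
    exact (Real.summable_pow_div_factorial |z|).mul_left 2
  have hsum_geo : Summable (fun j : ℕ => ‖z ^ j‖) := by
    have := summable_geometric_of_lt_one (abs_nonneg z) hz
    apply this.congr
    intro j
    rw [norm_pow]
    rfl
  have hprod := tsum_mul_tsum_eq_tsum_sum_antidiagonal_of_summable_norm hsum_gz hsum_geo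
  have hanti : ∀ n : ℕ, (∑ kl ∈ Finset.HasAntidiagonal.antidiagonal n, (g kl.1 * z ^ kl.1) * z ^ kl.2)
      = cseq n * z ^ n := by
    intro n
    rw [Finset.Nat.sum_antidiagonal_eq_sum_range_succ_mk]
    unfold cseq
    rw [Finset.sum_mul]
    apply Finset.sum_congr rfl
    intro k hk
    rw [Finset.mem_range] at hk
    rw [mul_assoc, ← pow_add]
    congr 2
    omega
  have hexp1 : Real.exp z = ∑' n : ℕ, z ^ n / (n.factorial : ℝ) := by
    rw [Real.exp_eq_exp_ℝ]
    exact congrFun (NormedSpace.exp_eq_tsum_div (𝔸 := ℝ)) z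
  have hexp2 : Real.exp (-z) = ∑' n : ℕ, (-z) ^ n / (n.factorial : ℝ) := by
    rw [Real.exp_eq_exp_ℝ]
    exact congrFun (NormedSpace.exp_eq_tsum_div (𝔸 := ℝ)) (-z)
  have hgsum : (∑' i : ℕ, g i * z ^ i) = Real.exp z - 2 + Real.exp (-z) := by
    have h1 : Summable (fun n : ℕ => z ^ n / (n.factorial : ℝ)) :=
      Real.summable_pow_div_factorial z
    have h2 : Summable (fun n : ℕ => (-z) ^ n / (n.factorial : ℝ)) :=
      Real.summable_pow_div_factorial (-z)
    have hI : Summable (fun i : ℕ => if i = 0 then (2:ℝ) else 0) :=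
      (hasSum_ite_eq 0 (2:ℝ)).summable
    have hpt : ∀ i : ℕ, g i * z ^ i
        = (z ^ i / (i.factorial : ℝ) + (-z) ^ i / (i.factorial : ℝ))
          - (if i = 0 then (2:ℝ) else 0) := by
      intro i
      match i with
      | 0 =>
        unfold g
        norm_num
      | (i+1) =>
        unfold g
        rw [if_neg (by omega), if_neg (by omega)]
        have hneg : (-z)^(i+1) = (-1:ℝ)^(i+1) * z^(i+1) := by
          rw [neg_pow]
        rw [hneg, sub_zero]
        have hf : (((i+1).factorial : ℕ) : ℝ) ≠ 0 := fact_ne _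
        field_simp
    rw [tsum_congr hpt, Summable.tsum_sub (h1.add h2) hI, Summable.tsum_add h1 h2, tsum_ite_eq, hexp1, hexp2]
    ring
  have hgeo_eq : (∑' j : ℕ, z ^ j) = (1 - z)⁻¹ :=
    tsum_geometric_of_norm_lt_one (by simpa using hz)
  have hc : (Real.exp z - 2 + Real.exp (-z)) * (1-z)⁻¹ = ∑' n : ℕ, cseq n * z ^ n := by
    rw [← hgsum, ← hgeo_eq, hprod]
    exact tsum_congr hanti
  have hsumc : Summable (fun n : ℕ => cseq n * z ^ n) := by
    have h0 := (summable_norm_sum_mul_antidiagonal_of_summable_norm hsum_gz hsum_geo).of_norm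
    exact h0.congr hanti
  have hc0 : cseq 0 = 0 := by
    unfold cseq g
    simp
  have hc1 : cseq 1 = 0 := by
    unfold cseq
    rw [Finset.sum_range_succ, Finset.sum_range_one]
    unfold g
    norm_num
  have hpeel : (∑' n : ℕ, cseq n * z ^ n) = ∑' n : ℕ, cseq (n+2) * z ^ (n+2) := by
    rw [Summable.tsum_eq_zero_add hsumc, hc0]
    have hs1 : Summable (fun n : ℕ => cseq (n+1) * z ^ (n+1)) := by
      have hi : Function.Injective (fun n : ℕ => n + 1) := fun a b h => by simpa using h
      exact hsumc.comp_injective hi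
    rw [Summable.tsum_eq_zero_add hs1, hc1]
    norm_num
  have hlhs : (∑' n : ℕ, (alpha (n + 2) : ℝ) * z ^ (n + 2) / ((n + 2).factorial : ℝ))
      = ∑' n : ℕ, cseq (n+2) * z ^ (n+2) := by
    apply tsum_congr
    intro n
    rw [alpha_closed n]
    have hf : (((n+2).factorial : ℕ) : ℝ) ≠ 0 := fact_ne _
    unfold cseq
    field_simp
  rw [hlhs, ← hpeel, ← hc]
  rw [div_eq_mul_inv]
end

section
/- Let α_n(b,b) = Σ 2^{dd(π)}, summed over permutations π of [n] whose descent word starts with a descent, ends with a descent, and has no double ascents, where dd(π) is the number of double descents. Then Σ_{n≥2} α_n(b,b) z^n/n! = e^{−z}/(1−z) − 1. -/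
open Finset
open scoped Classical

/-- α_n(b,b) = Σ 2^{dd(π)} over permutations of [n] with no double ascents whose
descent word starts and ends with a descent. -/
noncomputable def alphaBB (n : ℕ) : ℕ :=
  ∑ π ∈ Finset.univ.filter
      (fun π : Equiv.Perm (Fin n) => NoDoubleAsc π ∧ Desc π 0 ∧ Desc π (n - 2)),
    2 ^ dd π

/-!
Cut a permutation into its maximal decreasing runs. Its descent word starts and ends with `b` and
has no factor `aa` exactly when every run has length at least 2, and a run of length `L` carries
`L - 2` double descents. The compositions of `L` into parts `p ≥ 2`, weighted by `∏ (p - 1)`, have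
total weight `2 ^ (L - 2)`, so `α_n(b,b)` is the total weight of all cuttings of permutations of
`[n]` into decreasing pieces of length at least 2, a piece of length `p` weighing `p - 1` (both
sides satisfy the same recursion in the first letter). Choosing the first piece gives
`A_n = ∑_k (k - 1) C(n,k) A_{n-k}`, that is `A(z) = 1 + ((z - 1) e^z + 1) A(z)`, whence
`A(z) = e^{-z} / (1 - z)` and `α_n(b,b) = A_n = n! ∑_{k ≤ n} (-1)^k / k!` for `n ≥ 2`.
-/

namespace AlphaBB

open Nat

section DescentWord

-- Descent words are lists of `Bool`, `true` standing for a descent `b`.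

def numBB (w : List Bool) : ℕ :=
  ∑ i ∈ range w.length, if w.getD i false = true ∧ w.getD (i + 1) false = true then 1 else 0

def NoAA (w : List Bool) : Prop :=
  ∀ i, i + 1 < w.length → w.getD i false = true ∨ w.getD (i + 1) false = true

theorem numBB_cons (c : Bool) (w : List Bool) :
    numBB (c :: w) = (if c = true ∧ w.getD 0 false = true then 1 else 0) + numBB w := by
  rw [numBB, List.length_cons, sum_range_succ', add_comm]
  simp [numBB]

theorem noAA_cons (c : Bool) {w : List Bool} (hw : w ≠ []) :
    NoAA (c :: w) ↔ (c = true ∨ w.getD 0 false = true) ∧ NoAA w := by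
  obtain ⟨d, t, rfl⟩ := List.exists_cons_of_ne_nil hw
  constructor
  · intro h
    exact ⟨by simpa using h 0 (by simp), fun i hi => by simpa using h (i + 1) (by simpa using hi)⟩
  · rintro ⟨h0, h⟩ (_ | i) hi
    · simpa using h0
    · simpa using h i (by simpa using hi)

theorem getD_length_sub_one_cons (c : Bool) {w : List Bool} (hw : w ≠ []) :
    (c :: w).getD ((c :: w).length - 1) false = w.getD (w.length - 1) false := by
  obtain ⟨d, t, rfl⟩ := List.exists_cons_of_ne_nil hw
  simp

noncomputable def weightBB (w : List Bool) : ℕ :=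
  if w.getD 0 false = true ∧ w.getD (w.length - 1) false = true ∧ NoAA w then 2 ^ numBB w
  else 0

noncomputable def weightXB (w : List Bool) : ℕ :=
  if w = [] then 1
  else if w.getD (w.length - 1) false = true ∧ NoAA w then 2 ^ numBB w else 0

noncomputable def weightXB' (w : List Bool) : ℕ :=
  if w = [] then 1
  else if w.getD (w.length - 1) false = true ∧ NoAA w then
    2 ^ (numBB w + if w.getD 0 false = true then 1 else 0)
  else 0

theorem weightBB_cons (c : Bool) (w : List Bool) :
    weightBB (c :: w) = if c = true then weightXB' w else 0 := by
  rcases eq_or_ne w [] with rfl | hw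
  · cases c <;> simp [weightBB, weightXB', numBB, NoAA]
  · simp only [weightBB, weightXB', if_neg hw, List.getD_cons_zero, getD_length_sub_one_cons c hw,
      noAA_cons c hw, numBB_cons]
    generalize w.getD 0 false = a, w.getD (w.length - 1) false = e
    cases c <;> cases a <;> cases e <;> by_cases h : NoAA w <;> simp [h, pow_succ, add_comm]

theorem weightXB'_cons (c : Bool) (w : List Bool) :
    weightXB' (c :: w) = weightBB w + if c = true then weightXB' w + weightXB w else 0 := by
  rcases eq_or_ne w [] with rfl | hw
  · cases c <;> simp [weightBB, weightXB, weightXB', numBB, NoAA]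
  · simp only [weightBB, weightXB, weightXB', if_neg hw, List.cons_ne_nil, if_false,
      List.getD_cons_zero, getD_length_sub_one_cons c hw, noAA_cons c hw, numBB_cons]
    generalize w.getD 0 false = a, w.getD (w.length - 1) false = e
    cases c <;> cases a <;> cases e <;> by_cases h : NoAA w <;> simp [h, pow_succ] <;> ring

theorem weightXB_cons (c : Bool) (w : List Bool) :
    weightXB (c :: w) = weightBB w + if c = true then weightXB w else 0 := by
  rcases eq_or_ne w [] with rfl | hw
  · cases c <;> simp [weightBB, weightXB, numBB, NoAA]
  · simp only [weightBB, weightXB, if_neg hw, List.cons_ne_nil, if_false,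
      getD_length_sub_one_cons c hw, noAA_cons c hw, numBB_cons]
    generalize w.getD 0 false = a, w.getD (w.length - 1) false = e
    cases c <;> cases a <;> cases e <;> by_cases h : NoAA w <;>
      simp [h, pow_succ, add_comm, mul_two]

end DescentWord

section DecreasingRuns

/- The total weight of the cuttings of `l` into decreasing pieces of length at least 2, a piece of
length `k` weighing `k - 1`. In `runSum₀` and `runSum₁` the first piece may have any length
`k ≥ 1` and weighs `1`, resp. `k`. -/
noncomputable def runSum (l : List ℕ) : ℕ :=
  if h : l = [] then 1
  else ∑ k ∈ (Icc 2 l.length).attach,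
    (k.1 - 1) * if (l.take k.1).SortedGT then runSum (l.drop k.1) else 0
termination_by l.length
decreasing_by
  have := List.length_pos_iff.mpr h
  have := (mem_Icc.mp k.2).1
  simp only [List.length_drop]
  omega

noncomputable def runSum₀ (l : List ℕ) : ℕ :=
  ∑ k ∈ Icc 1 l.length, if (l.take k).SortedGT then runSum (l.drop k) else 0

noncomputable def runSum₁ (l : List ℕ) : ℕ :=
  ∑ k ∈ Icc 1 l.length, k * if (l.take k).SortedGT then runSum (l.drop k) else 0

theorem runSum_nil : runSum [] = 1 := by
  rw [runSum, dif_pos rfl]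

theorem runSum_of_ne_nil {l : List ℕ} (hl : l ≠ []) :
    runSum l = ∑ k ∈ Icc 2 l.length,
      (k - 1) * if (l.take k).SortedGT then runSum (l.drop k) else 0 := by
  rw [runSum, dif_neg hl]
  exact sum_attach (Icc 2 l.length) fun k =>
    (k - 1) * if (l.take k).SortedGT then runSum (l.drop k) else 0

theorem sum_Icc_two_cons_cons (x y : ℕ) (t : List ℕ) (c : ℕ → ℕ) :
    ∑ k ∈ Icc 2 (x :: y :: t).length,
        c k * (if ((x :: y :: t).take k).SortedGT then runSum ((x :: y :: t).drop k) else 0)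
      = if y < x then
          ∑ k ∈ Icc 1 (y :: t).length,
            c (k + 1) * if ((y :: t).take k).SortedGT then runSum ((y :: t).drop k) else 0
        else 0 := by
  rw [List.length_cons, ← map_add_right_Icc 1 _ 1, sum_map]
  split_ifs with hxy
  · refine sum_congr rfl fun k hk => ?_
    obtain ⟨j, rfl⟩ := Nat.exists_eq_add_of_le' (mem_Icc.mp hk).1
    simp [List.sortedGT_iff_isChain, List.isChain_cons_cons, hxy]
  · refine sum_eq_zero fun k hk => ?_
    obtain ⟨j, rfl⟩ := Nat.exists_eq_add_of_le' (mem_Icc.mp hk).1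
    simp [List.sortedGT_iff_isChain, List.isChain_cons_cons, hxy]

theorem runSum_singleton (x : ℕ) : runSum [x] = 0 := by
  simp [runSum_of_ne_nil]

theorem runSum₀_singleton (x : ℕ) : runSum₀ [x] = 1 := by
  simp [runSum₀, runSum_nil, List.sortedGT_iff_isChain]

theorem runSum₁_singleton (x : ℕ) : runSum₁ [x] = 1 := by
  simp [runSum₁, runSum_nil, List.sortedGT_iff_isChain]

theorem runSum_cons_cons (x y : ℕ) (t : List ℕ) :
    runSum (x :: y :: t) = if y < x then runSum₁ (y :: t) else 0 := by
  rw [runSum_of_ne_nil (List.cons_ne_nil _ _), sum_Icc_two_cons_cons, runSum₁]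
  simp

theorem sum_Icc_one_cons_cons (x y : ℕ) (t : List ℕ) (c : ℕ → ℕ) :
    ∑ k ∈ Icc 1 (x :: y :: t).length,
        c k * (if ((x :: y :: t).take k).SortedGT then runSum ((x :: y :: t).drop k) else 0)
      = c 1 * runSum (y :: t) + if y < x then
          ∑ k ∈ Icc 1 (y :: t).length,
            c (k + 1) * if ((y :: t).take k).SortedGT then runSum ((y :: t).drop k) else 0
        else 0 := by
  have hIcc : Icc 1 (x :: y :: t).length = insert 1 (Icc 2 (x :: y :: t).length) :=
    (insert_Icc_add_one_left_eq_Icc (by simp)).symm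
  rw [hIcc, sum_insert (by simp), sum_Icc_two_cons_cons]
  simp [List.sortedGT_iff_isChain]

theorem runSum₁_cons_cons (x y : ℕ) (t : List ℕ) :
    runSum₁ (x :: y :: t) =
      runSum (y :: t) + if y < x then runSum₁ (y :: t) + runSum₀ (y :: t) else 0 := by
  rw [runSum₁, sum_Icc_one_cons_cons x y t (fun k => k), runSum₁, runSum₀, ← sum_add_distrib]
  simp only [one_mul, add_mul]

theorem runSum₀_cons_cons (x y : ℕ) (t : List ℕ) :
    runSum₀ (x :: y :: t) = runSum (y :: t) + if y < x then runSum₀ (y :: t) else 0 := by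
  simpa [runSum₀] using sum_Icc_one_cons_cons x y t 1

end DecreasingRuns

def descentWord (l : List ℕ) : List Bool :=
  List.zipWith (fun a b => decide (b < a)) l l.tail

theorem descentWord_cons_cons (x y : ℕ) (t : List ℕ) :
    descentWord (x :: y :: t) = decide (y < x) :: descentWord (y :: t) := rfl

theorem runSums_eq_weights {l : List ℕ} (hl : l ≠ []) :
    runSum l = weightBB (descentWord l) ∧ runSum₀ l = weightXB (descentWord l) ∧
      runSum₁ l = weightXB' (descentWord l) := by
  induction l with
  | nil => exact absurd rfl hl
  | cons x t ih =>
    cases t with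
    | nil =>
      simp [runSum_singleton, runSum₀_singleton, runSum₁_singleton, descentWord, weightBB,
        weightXB, weightXB']
    | cons y t =>
      obtain ⟨h, h₀, h₁⟩ := ih (List.cons_ne_nil _ _)
      rw [runSum_cons_cons, runSum₀_cons_cons, runSum₁_cons_cons, descentWord_cons_cons,
        weightBB_cons, weightXB_cons, weightXB'_cons, h, h₀, h₁]
      simp

section Arrangements

def arrangements (K : Finset ℕ) : Finset (List ℕ) :=
  (K.sort).permutations.toFinset

theorem mem_arrangements {K : Finset ℕ} {l : List ℕ} :
    l ∈ arrangements K ↔ l.Nodup ∧ l.toFinset = K := by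
  rw [arrangements, List.mem_toFinset, List.mem_permutations]
  constructor
  · intro h
    exact ⟨h.nodup_iff.mpr (K.sort_nodup _), by rw [List.toFinset_eq_of_perm _ _ h, sort_toFinset]⟩
  · rintro ⟨hnd, rfl⟩
    exact List.perm_of_nodup_nodup_toFinset_eq hnd (sort_nodup _ _) (by rw [sort_toFinset])

theorem length_of_mem_arrangements {K : Finset ℕ} {l : List ℕ} (h : l ∈ arrangements K) :
    l.length = K.card := by
  obtain ⟨hnd, rfl⟩ := mem_arrangements.mp h
  exact (List.toFinset_card_of_nodup hnd).symm

theorem card_arrangements (K : Finset ℕ) : (arrangements K).card = K.card ! := by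
  rw [arrangements, List.toFinset_card_of_nodup (List.nodup_permutations _ (K.sort_nodup _)),
    List.length_permutations, length_sort]

theorem arrangements_empty : arrangements ∅ = {[]} := by
  simp [arrangements]

theorem take_toFinset_mem_powersetCard {K : Finset ℕ} {l : List ℕ} (hl : l ∈ arrangements K)
    {k : ℕ} (hk : k ≤ K.card) : (l.take k).toFinset ∈ K.powersetCard k := by
  obtain ⟨hnd, rfl⟩ := mem_arrangements.mp hl
  refine mem_powersetCard.mpr ⟨fun a ha =>
    List.mem_toFinset.mpr (List.mem_of_mem_take (List.mem_toFinset.mp ha)), ?_⟩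
  rw [List.toFinset_card_of_nodup (hnd.sublist (List.take_sublist k l)), List.length_take,
    List.toFinset_card_of_nodup hnd] at *
  omega

theorem drop_mem_arrangements {K : Finset ℕ} {l : List ℕ} (hl : l ∈ arrangements K) (k : ℕ) :
    l.drop k ∈ arrangements (K \ (l.take k).toFinset) := by
  obtain ⟨hnd, rfl⟩ := mem_arrangements.mp hl
  have hsplit : (l.take k ++ l.drop k).Nodup := (List.take_append_drop k l).symm ▸ hnd
  have hunion : l.toFinset = (l.take k).toFinset ∪ (l.drop k).toFinset := by
    rw [← List.toFinset_append, List.take_append_drop]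
  refine mem_arrangements.mpr ⟨(List.nodup_append'.mp hsplit).2.1, ?_⟩
  rw [hunion, union_sdiff_cancel_left]
  exact List.disjoint_toFinset_iff_disjoint.mpr (List.nodup_append'.mp hsplit).2.2

theorem sort_append_mem_arrangements {K K' : Finset ℕ} (hK' : K' ⊆ K) {l : List ℕ}
    (hl : l ∈ arrangements (K \ K')) : K'.sort (· ≥ ·) ++ l ∈ arrangements K := by
  obtain ⟨hnd, hl⟩ := mem_arrangements.mp hl
  refine mem_arrangements.mpr ⟨List.nodup_append'.mpr ⟨sort_nodup _ _, hnd, ?_⟩, ?_⟩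
  · rw [← List.disjoint_toFinset_iff_disjoint, sort_toFinset, hl]
    exact disjoint_sdiff
  · rw [List.toFinset_append, sort_toFinset, hl, union_sdiff_of_subset hK']

theorem sort_toFinset_of_sortedGT {s : List ℕ} (hs : s.SortedGT) :
    s.toFinset.sort (· ≥ ·) = s :=
  (sortedGT_sort _).eq_of_mem_iff hs (by simp)

theorem sum_arrangements_ite_sortedGT_take {M : Type*} [AddCommMonoid M] (K : Finset ℕ) {k : ℕ}
    (hk : k ≤ K.card) (f : List ℕ → M) :
    ∑ l ∈ arrangements K, (if (l.take k).SortedGT then f (l.drop k) else 0)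
      = ∑ K' ∈ K.powersetCard k, ∑ l ∈ arrangements (K \ K'), f l := by
  rw [← sum_filter, sum_sigma']
  refine sum_bij' (fun l _ => ⟨(l.take k).toFinset, l.drop k⟩)
    (fun p _ => p.1.sort (· ≥ ·) ++ p.2) (fun l hl => ?_) (fun p hp => ?_) (fun l hl => ?_)
    (fun p hp => ?_) (fun _ _ => rfl)
  · obtain ⟨hl, -⟩ := mem_filter.mp hl
    exact mem_sigma.mpr ⟨take_toFinset_mem_powersetCard hl hk, drop_mem_arrangements hl k⟩
  · obtain ⟨hK', hl⟩ := mem_sigma.mp hp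
    obtain ⟨hsub, hcard⟩ := mem_powersetCard.mp hK'
    have hlen : (p.1.sort (· ≥ ·)).length = k := by rw [length_sort, hcard]
    refine mem_filter.mpr ⟨sort_append_mem_arrangements hsub hl, ?_⟩
    rw [List.take_left' hlen]
    exact sortedGT_sort _
  · rw [sort_toFinset_of_sortedGT (mem_filter.mp hl).2, List.take_append_drop]
  · obtain ⟨hK', -⟩ := mem_sigma.mp hp
    have hlen : (p.1.sort (· ≥ ·)).length = k := by rw [length_sort, (mem_powersetCard.mp hK').2]
    rw [List.take_left' hlen, List.drop_left' hlen, sort_toFinset]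

end Arrangements

section Series

open PowerSeries

noncomputable def truncExpNegOne (n : ℕ) : ℝ :=
  ∑ k ∈ range (n + 1), (-1 : ℝ) ^ k / k !

theorem coeff_evalNegHom_exp (n : ℕ) :
    coeff n (evalNegHom (exp ℝ)) = (-1 : ℝ) ^ n / n ! := by
  simp [evalNegHom, coeff_rescale, coeff_exp, div_eq_mul_inv]

theorem coeff_evalNegHom_exp_mul_mk_one (n : ℕ) :
    coeff n (evalNegHom (exp ℝ) * PowerSeries.mk 1) = truncExpNegOne n := by
  rw [coeff_mul, Finset.Nat.sum_antidiagonal_eq_sum_range_succ_mk]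
  simp [coeff_evalNegHom_exp, truncExpNegOne]

theorem mk_eq_X_sub_one_mul_exp :
    PowerSeries.mk (fun k => ((k : ℝ) - 1) / k !) = (X - 1) * exp ℝ := by
  ext (_ | n)
  · simp
  · rw [sub_mul, map_sub, coeff_succ_X_mul, one_mul]
    simp [coeff_exp, factorial_succ]
    field_simp
    ring

theorem truncExpNegOne_eq_sum_Icc {n : ℕ} (hn : n ≠ 0) :
    truncExpNegOne n = ∑ k ∈ Icc 2 n, ((k : ℝ) - 1) / k ! * truncExpNegOne (n - k) := by
  have h : PowerSeries.mk (fun k => ((k : ℝ) - 1) / k !) * (evalNegHom (exp ℝ) * PowerSeries.mk 1)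
      = -1 := by
    rw [mk_eq_X_sub_one_mul_exp, mul_assoc, ← mul_assoc (exp ℝ), exp_mul_exp_neg_eq_one, one_mul,
      ← neg_sub, neg_mul, mul_comm, mk_one_mul_one_sub_eq_one]
  have hcoeff := congrArg (coeff n) h
  rw [coeff_mul, Finset.Nat.sum_antidiagonal_eq_sum_range_succ_mk, range_succ_eq_Icc_zero,
    ← insert_Icc_add_one_left_eq_Icc (zero_le n), zero_add,
    ← insert_Icc_add_one_left_eq_Icc (Nat.one_le_iff_ne_zero.mpr hn)] at hcoeff
  simp [coeff_evalNegHom_exp_mul_mk_one, hn] at hcoeff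
  linarith

theorem hasSum_truncExpNegOne_mul_pow {z : ℝ} (hz : |z| < 1) :
    HasSum (fun n => truncExpNegOne n * z ^ n) (Real.exp (-z) / (1 - z)) := by
  have hexp : HasSum (fun n => (-z) ^ n / n !) (Real.exp (-z)) := by
    rw [Real.exp_eq_exp_ℝ]
    exact NormedSpace.expSeries_div_hasSum_exp (-z)
  have hgeom : HasSum (fun n => z ^ n) (1 - z)⁻¹ := hasSum_geometric_of_abs_lt_one hz
  have hprod := hasSum_sum_range_mul_of_summable_norm
    (NormedSpace.norm_expSeries_div_summable (-z)) (summable_norm_iff.mpr hgeom.summable)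
  rw [hexp.tsum_eq, hgeom.tsum_eq, ← div_eq_mul_inv] at hprod
  refine hprod.congr_fun fun n => ?_
  rw [truncExpNegOne, sum_mul]
  refine sum_congr rfl fun k hk => ?_
  obtain ⟨j, rfl⟩ := Nat.exists_eq_add_of_le (mem_range_succ_iff.mp hk)
  rw [Nat.add_sub_cancel_left, neg_pow, pow_add]
  ring

end Series

theorem cast_runSum_of_ne_nil {l : List ℕ} (hl : l ≠ []) :
    (runSum l : ℝ) = ∑ k ∈ Icc 2 l.length,
      ((k : ℝ) - 1) * if (l.take k).SortedGT then (runSum (l.drop k) : ℝ) else 0 := by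
  rw [runSum_of_ne_nil hl, Nat.cast_sum]
  refine sum_congr rfl fun k hk => ?_
  rw [Nat.cast_mul, Nat.cast_sub (by linarith [(mem_Icc.mp hk).1]), Nat.cast_one, Nat.cast_ite,
    Nat.cast_zero]

theorem sum_arrangements_runSum (K : Finset ℕ) :
    ∑ l ∈ arrangements K, (runSum l : ℝ) = K.card ! * truncExpNegOne K.card := by
  induction hK : K.card using Nat.strong_induction_on generalizing K with
  | _ n ih =>
  rcases Nat.eq_zero_or_pos n with rfl | hn
  · simp [card_eq_zero.mp hK, arrangements_empty, runSum_nil, truncExpNegOne]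
  have hlen {l} (hl : l ∈ arrangements K) : l.length = n := hK ▸ length_of_mem_arrangements hl
  calc ∑ l ∈ arrangements K, (runSum l : ℝ)
      = ∑ k ∈ Icc 2 n, ((k : ℝ) - 1) * ∑ l ∈ arrangements K,
          if (l.take k).SortedGT then (runSum (l.drop k) : ℝ) else 0 := by
        rw [sum_congr rfl fun l hl => hlen hl ▸ cast_runSum_of_ne_nil
          (List.ne_nil_of_length_pos (hlen hl ▸ hn)), sum_comm]
        simp_rw [mul_sum]
    _ = ∑ k ∈ Icc 2 n, ((k : ℝ) - 1) * (n.choose k * ((n - k) ! * truncExpNegOne (n - k))) := by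
        refine sum_congr rfl fun k hk => ?_
        obtain ⟨hk2, hkn⟩ := mem_Icc.mp hk
        rw [sum_arrangements_ite_sortedGT_take K (hK ▸ hkn) fun l => (runSum l : ℝ),
          sum_congr rfl fun K' hK' => ?_,
          sum_const, card_powersetCard, hK, nsmul_eq_mul]
        obtain ⟨hsub, hcard⟩ := mem_powersetCard.mp hK'
        rw [ih (n - k) (by omega) (K \ K') (by rw [card_sdiff_of_subset hsub, hK, hcard])]
    _ = n ! * ∑ k ∈ Icc 2 n, ((k : ℝ) - 1) / k ! * truncExpNegOne (n - k) := by
        rw [mul_sum]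
        refine sum_congr rfl fun k hk => ?_
        rw [Nat.cast_choose ℝ (mem_Icc.mp hk).2]
        field_simp
    _ = n ! * truncExpNegOne n := by rw [← truncExpNegOne_eq_sum_Icc hn.ne']

section OneLine

variable {n : ℕ}

def oneLine (π : Equiv.Perm (Fin n)) : List ℕ :=
  List.ofFn fun i => (π i : ℕ)

theorem oneLine_injective : Function.Injective (oneLine (n := n)) := fun _ _ h =>
  Equiv.ext fun i => Fin.val_injective (congrFun (List.ofFn_injective h) i)

theorem oneLine_mem_arrangements (π : Equiv.Perm (Fin n)) : oneLine π ∈ arrangements (range n) := by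
  refine mem_arrangements.mpr ⟨List.nodup_ofFn.mpr fun i j h => π.injective (Fin.val_injective h),
    ?_⟩
  ext x
  simp only [oneLine, List.mem_toFinset, List.mem_ofFn, mem_range]
  exact ⟨fun ⟨i, hi⟩ => hi ▸ (π i).isLt, fun hx => ⟨π.symm ⟨x, hx⟩, by simp⟩⟩

theorem map_oneLine_univ :
    (univ : Finset (Equiv.Perm (Fin n))).map ⟨oneLine, oneLine_injective⟩ =
      arrangements (range n) := by
  refine eq_of_subset_of_card_le (fun l hl => ?_) ?_
  · obtain ⟨π, -, rfl⟩ := mem_map.mp hl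
    exact oneLine_mem_arrangements π
  · rw [card_map, Finset.card_univ, Fintype.card_perm, Fintype.card_fin, card_arrangements,
      card_range]

theorem length_descentWord_oneLine (π : Equiv.Perm (Fin n)) :
    (descentWord (oneLine π)).length = n - 1 := by
  simp [descentWord, oneLine]

theorem getD_descentWord_oneLine (π : Equiv.Perm (Fin n)) (i : ℕ) :
    (descentWord (oneLine π)).getD i false = true ↔ Desc π i := by
  by_cases h : i + 1 < n
  · rw [List.getD_eq_getElem _ _ (by rw [length_descentWord_oneLine]; omega)]
    simp [descentWord, oneLine, Desc, h]
  · rw [List.getD_eq_default _ _ (by rw [length_descentWord_oneLine]; omega)]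
    simp [Desc, h]

theorem asc_iff_not_desc (π : Equiv.Perm (Fin n)) (i : ℕ) :
    Asc π i ↔ i + 1 < n ∧ ¬ Desc π i := by
  refine ⟨fun ⟨h, hlt⟩ => ⟨h, fun ⟨_, hgt⟩ => hlt.asymm hgt⟩, fun ⟨h, hd⟩ => ⟨h, ?_⟩⟩
  refine (lt_or_gt_of_ne fun heq => ?_).resolve_right fun hgt => hd ⟨h, hgt⟩
  simpa using π.injective heq

theorem noAA_descentWord_oneLine_iff (π : Equiv.Perm (Fin n)) :
    NoAA (descentWord (oneLine π)) ↔ NoDoubleAsc π := by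
  simp only [NoAA, NoDoubleAsc, length_descentWord_oneLine, getD_descentWord_oneLine,
    asc_iff_not_desc]
  refine ⟨fun h i ⟨⟨hi, hd⟩, ⟨_, hd'⟩⟩ => ?_, fun h i hi => ?_⟩
  · exact (h i (by omega)).elim hd hd'
  · by_contra hcon
    push Not at hcon
    exact h i ⟨⟨by omega, hcon.1⟩, ⟨by omega, hcon.2⟩⟩

theorem numBB_descentWord_oneLine (π : Equiv.Perm (Fin n)) :
    numBB (descentWord (oneLine π)) = dd π := by
  rw [dd, card_filter, numBB, length_descentWord_oneLine]
  refine (sum_subset (range_subset_range.mpr (Nat.sub_le n 1)) fun i _ hi => ?_).trans ?_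
  · simp only [mem_range] at hi
    rw [List.getD_eq_default _ _ (by rw [length_descentWord_oneLine]; omega)]
    simp
  · simp only [getD_descentWord_oneLine]

theorem weightBB_descentWord_oneLine (π : Equiv.Perm (Fin n)) :
    weightBB (descentWord (oneLine π)) =
      if NoDoubleAsc π ∧ Desc π 0 ∧ Desc π (n - 2) then 2 ^ dd π else 0 := by
  refine if_congr ?_ (by rw [numBB_descentWord_oneLine]) rfl
  rw [getD_descentWord_oneLine, length_descentWord_oneLine, Nat.sub_sub, getD_descentWord_oneLine,
    noAA_descentWord_oneLine_iff]
  tauto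

theorem alphaBB_eq_sum_runSum (hn : 2 ≤ n) :
    alphaBB n = ∑ l ∈ arrangements (range n), runSum l := by
  rw [← map_oneLine_univ, sum_map, alphaBB, sum_filter]
  refine sum_congr rfl fun π _ => ?_
  rw [Function.Embedding.coeFn_mk, (runSums_eq_weights _).1, weightBB_descentWord_oneLine]
  intro h
  have := congrArg List.length h
  simp [oneLine] at this
  omega

end OneLine

end AlphaBB

open AlphaBB

/-- Σ_{n≥2} α_n(b,b) z^n/n! = e^{−z}/(1−z) − 1 for |z| < 1. -/
theorem egf_alphaBB (z : ℝ) (hz : |z| < 1) :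
    ∑' n : ℕ, (alphaBB (n + 2) : ℝ) * z ^ (n + 2) / (n + 2).factorial
      = Real.exp (-z) / (1 - z) - 1 := by
  have hterm (n : ℕ) :
      (alphaBB (n + 2) : ℝ) * z ^ (n + 2) / (n + 2).factorial =
        truncExpNegOne (n + 2) * z ^ (n + 2) := by
    rw [alphaBB_eq_sum_runSum (by omega), Nat.cast_sum, sum_arrangements_runSum, card_range]
    field_simp
  have hhead : ∑ n ∈ range 2, truncExpNegOne n * z ^ n = 1 := by
    simp [sum_range_succ, truncExpNegOne]
  have htail := (hasSum_nat_add_iff' 2).mpr (hasSum_truncExpNegOne_mul_pow hz)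
  rw [hhead] at htail
  rw [tsum_congr hterm, htail.tsum_eq]
end

section
/- For n ≥ 2, the number of derangements D_n equals Σ_π 2^{dd(π)}, where the sum is over permutations π of [n] with no double ascents whose descent word starts and ends with a descent, and dd(π) is the number of double descents of π. -/
/-!
Encode a composition of `n` by its set of cuts `A ⊆ {0, …, n - 2}` and weight it by
`w(A) = ∏ (c - 1)` over its block sizes `c`. The permutations whose ascents all lie in `A` are
those decreasing on every block, `n! / ∏ c!` of them, so `∑_A w(A) · #{π | Asc π ⊆ A}` obeys the
first-block recursion `D_n = ∑_c (c - 1) C(n, c) D_(n - c)` of the derangement numbers and equals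
`D_n`. Exchanging the sums, `D_n = ∑_π ∑_(A ⊇ Asc π) w(A)`. The inner sum factors over the blocks
of the composition cut at `Asc π`, a block of size `c` contributing the total weight `2^(c - 2)`
of the compositions of `c`, which is `0` for `c = 1`. So it vanishes unless every block has at
least two elements, i.e. `π` has no double ascent and its descent word starts and ends with a
descent; then it is `2^(n - 2 - 2 #Asc π) = 2^dd(π)`.
-/

open Finset
open scoped Classical

open scoped Nat

lemma sum_mul_two_pow_add (m : ℕ) : ∑ t ∈ range m, t * 2 ^ (m - 1 - t) + m + 1 = 2 ^ m := by
  induction m with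
  | zero => simp
  | succ m ih =>
    have h : ∀ t ∈ range m, t * 2 ^ (m - t) = 2 * (t * 2 ^ (m - 1 - t)) := by
      intro t ht
      rw [mem_range] at ht
      rw [show m - t = m - 1 - t + 1 by omega, pow_succ]
      ring
    rw [sum_range_succ, Nat.add_sub_cancel, Nat.sub_self, pow_zero, mul_one, sum_congr rfl h,
      ← mul_sum, pow_succ, ← ih]
    ring

noncomputable def shiftDown (k : ℕ) (A : Finset ℕ) : Finset ℕ :=
  A.preimage (· + k) (add_left_injective k).injOn

lemma mem_shiftDown {k x : ℕ} {A : Finset ℕ} : x ∈ shiftDown k A ↔ x + k ∈ A :=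
  Finset.mem_preimage

/-- Cut sets `A ⊆ {0, …, n - 2}` encode compositions of `n`: the blocks end at the positions
in `A` and at `n - 1`. `consCut t A` puts the block `{0, …, t}` in front of the composition with
cut set `A`. -/
def consCut (t : ℕ) (A : Finset ℕ) : Finset ℕ :=
  insert t (A.map (addRightEmbedding (t + 1)))

lemma mem_consCut {t x : ℕ} {A : Finset ℕ} :
    x ∈ consCut t A ↔ x = t ∨ t < x ∧ x - (t + 1) ∈ A := by
  simp only [consCut, mem_insert, mem_map, addRightEmbedding_apply]
  constructor
  · rintro (rfl | ⟨a, ha, rfl⟩)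
    · exact Or.inl rfl
    · exact Or.inr ⟨by omega, by simpa using ha⟩
  · rintro (rfl | ⟨hx, ha⟩)
    · exact Or.inl rfl
    · exact Or.inr ⟨_, ha, by omega⟩

lemma mem_consCut_self (t : ℕ) (A : Finset ℕ) : t ∈ consCut t A := mem_insert_self _ _

lemma add_mem_consCut {t x : ℕ} {A : Finset ℕ} : x + (t + 1) ∈ consCut t A ↔ x ∈ A := by
  rw [mem_consCut, Nat.add_sub_cancel]
  refine ⟨?_, fun h => Or.inr ⟨by omega, h⟩⟩
  rintro (h | ⟨-, h⟩)
  · omega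
  · exact h

lemma shiftDown_consCut (t : ℕ) (A : Finset ℕ) : shiftDown (t + 1) (consCut t A) = A := by
  ext x
  rw [mem_shiftDown, add_mem_consCut]

lemma min'_consCut (t : ℕ) (A : Finset ℕ) : (consCut t A).min' (insert_nonempty _ _) = t :=
  le_antisymm (min'_le _ _ (mem_insert_self _ _)) <| le_min' _ _ _ fun x hx => by
    rcases mem_consCut.1 hx with rfl | ⟨hx, -⟩ <;> omega

lemma consCut_min'_shiftDown {A : Finset ℕ} (h : A.Nonempty) :
    consCut (A.min' h) (shiftDown (A.min' h + 1) A) = A := by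
  ext x
  rw [mem_consCut, mem_shiftDown]
  have := min'_le A x
  constructor
  · rintro (rfl | ⟨hx, hA⟩)
    · exact min'_mem A h
    · rwa [Nat.sub_add_cancel hx] at hA
  · intro hx
    rcases (this hx).eq_or_lt with h' | h'
    · exact Or.inl h'.symm
    · exact Or.inr ⟨h', by rwa [Nat.sub_add_cancel h']⟩

lemma exists_eq_consCut {A : Finset ℕ} (h : A.Nonempty) : ∃ t A', A = consCut t A' :=
  ⟨_, _, (consCut_min'_shiftDown h).symm⟩

lemma card_consCut (t : ℕ) (A : Finset ℕ) : #(consCut t A) = #A + 1 := by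
  rw [consCut, card_insert_of_notMem, card_map]
  simp only [mem_map, addRightEmbedding_apply, not_exists, not_and]
  omega

lemma forall_mem_consCut {t : ℕ} {A : Finset ℕ} {P : ℕ → Prop} :
    (∀ x ∈ consCut t A, P x) ↔ P t ∧ ∀ x ∈ A, P (x + (t + 1)) := by
  simp [consCut]

lemma consCut_injective {t t' : ℕ} {A A' : Finset ℕ} (h : consCut t A = consCut t' A') :
    t = t' ∧ A = A' := by
  have ht : t = t' := by
    rw [← min'_consCut t A, ← min'_consCut t' A']
    simp only [h]
  subst ht
  exact ⟨rfl, by rw [← shiftDown_consCut t A, h, shiftDown_consCut]⟩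

lemma consCut_subset_iff {t : ℕ} {A S : Finset ℕ} :
    consCut t A ⊆ S ↔ t ∈ S ∧ ∀ x ∈ A, x + (t + 1) ∈ S := by
  simp [consCut, subset_iff]

lemma consCut_subset_range_iff {t m : ℕ} {A : Finset ℕ} :
    consCut t A ⊆ range m ↔ t < m ∧ A ⊆ range (m - (t + 1)) := by
  rw [consCut_subset_iff, mem_range]
  simp only [subset_iff, mem_range]
  refine and_congr_right fun _ => forall₂_congr fun x _ => ?_
  omega

lemma consCut_subset_consCut_iff {b t : ℕ} {B A : Finset ℕ} :
    consCut b B ⊆ consCut t A ↔ t = b ∧ B ⊆ A ∨ t < b ∧ consCut (b - (t + 1)) B ⊆ A := by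
  rw [consCut_subset_iff]
  rcases lt_trichotomy t b with htb | rfl | htb
  · have hb : b = b - (t + 1) + (t + 1) := by omega
    have hx (x : ℕ) : x + (b + 1) = x + (b - (t + 1) + 1) + (t + 1) := by omega
    simp only [hx, add_mem_consCut, consCut_subset_iff, htb, htb.ne, true_and, false_and,
      false_or]
    rw [hb, add_mem_consCut, ← hb]
  · simp [add_mem_consCut, subset_iff, mem_consCut_self]
  · have hb : b ∉ consCut t A := by
      rw [mem_consCut]
      omega
    simp only [hb, false_and, htb.ne', htb.not_gt, false_or]

lemma sum_powerset_range_eq_add_sum_consCut {M : Type*} [AddCommMonoid M] (m : ℕ)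
    (f : Finset ℕ → M) :
    ∑ A ∈ (range m).powerset, f A
      = f ∅ + ∑ t ∈ range m, ∑ A ∈ (range (m - (t + 1))).powerset, f (consCut t A) := by
  rw [← add_sum_erase _ _ (empty_mem_powerset _), sum_sigma']
  symm
  congr 1
  refine sum_bij (fun x _ => consCut x.1 x.2) ?_ ?_ ?_ ?_
  · rintro ⟨t, A⟩ hx
    simp only [mem_sigma, mem_range, mem_powerset] at hx
    simp only [mem_erase, mem_powerset, consCut_subset_range_iff]
    exact ⟨(insert_nonempty _ _).ne_empty, hx⟩
  · rintro ⟨t, A⟩ - ⟨t', A'⟩ - h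
    obtain ⟨rfl, rfl⟩ := consCut_injective h
    rfl
  · intro A hA
    rw [mem_erase, mem_powerset] at hA
    have hne := nonempty_iff_ne_empty.2 hA.1
    refine ⟨⟨A.min' hne, shiftDown (A.min' hne + 1) A⟩, ?_, consCut_min'_shiftDown hne⟩
    rw [mem_sigma, mem_range, mem_powerset, ← consCut_subset_range_iff,
      consCut_min'_shiftDown hne]
    exact hA.2
  · intros
    rfl

/-- The product of `c - 1` over the block sizes `c` of the composition of `n` with cut set `A`. -/
noncomputable def cutWeight : ℕ → Finset ℕ → ℕ
  | 0, _ => 0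
  | n + 1, A =>
    if h : A.Nonempty then A.min' h * cutWeight (n - A.min' h) (shiftDown (A.min' h + 1) A)
    else n

lemma cutWeight_empty (n : ℕ) : cutWeight n ∅ = n - 1 := by
  cases n <;> simp [cutWeight]

lemma cutWeight_consCut (n t : ℕ) (A : Finset ℕ) :
    cutWeight n (consCut t A) = t * cutWeight (n - (t + 1)) A := by
  cases n with
  | zero => simp [cutWeight]
  | succ n =>
    rw [cutWeight, dif_pos ⟨t, mem_consCut_self t A⟩, min'_consCut, shiftDown_consCut]
    congr 2
    omega

noncomputable def supersetWeight (n : ℕ) (B : Finset ℕ) : ℕ :=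
  ∑ A ∈ (range (n - 1)).powerset with B ⊆ A, cutWeight n A

lemma supersetWeight_eq_add_sum (n : ℕ) (B : Finset ℕ) :
    supersetWeight n B = (if B = ∅ then n - 1 else 0) + ∑ t ∈ range (n - 1),
      t * ∑ A ∈ (range (n - (t + 1) - 1)).powerset with B ⊆ consCut t A,
        cutWeight (n - (t + 1)) A := by
  rw [supersetWeight, sum_filter, sum_powerset_range_eq_add_sum_consCut, cutWeight_empty]
  simp only [subset_empty]
  congr 1
  refine sum_congr rfl fun t _ => ?_
  simp only [sum_filter, mul_sum, cutWeight_consCut, Nat.sub_right_comm n 1, mul_ite, mul_zero]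

lemma supersetWeight_one (B : Finset ℕ) : supersetWeight 1 B = 0 := by
  simp [supersetWeight, cutWeight_empty]

lemma supersetWeight_empty_eq_add_sum (n : ℕ) :
    supersetWeight n ∅ = n - 1 + ∑ t ∈ range (n - 1), t * supersetWeight (n - (t + 1)) ∅ := by
  rw [supersetWeight_eq_add_sum, if_pos rfl]
  simp [supersetWeight]

lemma supersetWeight_empty {n : ℕ} (hn : 2 ≤ n) : supersetWeight n ∅ = 2 ^ (n - 2) := by
  induction n using Nat.strong_induction_on with
  | _ n ih =>
  obtain ⟨m, rfl⟩ : ∃ m, n = m + 2 := ⟨n - 2, by omega⟩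
  have h : ∀ t ∈ range m, t * supersetWeight (m + 2 - (t + 1)) ∅ = t * 2 ^ (m - 1 - t) := by
    intro t ht
    rw [mem_range] at ht
    rw [ih _ (by omega) (by omega)]
    congr 2
    omega
  rw [supersetWeight_empty_eq_add_sum, show m + 2 - 1 = m + 1 by rfl, sum_range_succ,
    show m + 2 - (m + 1) = 1 by omega, supersetWeight_one, sum_congr rfl h, Nat.add_sub_cancel,
    ← sum_mul_two_pow_add m]
  ring

/-- Peel off the first block `{0, …, t}` of a cut set `A ⊇ consCut b B`: either `t = b`, or
`t < b` and the rest of `A` contains `consCut (b - (t + 1)) B`, which factors by induction. -/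
lemma supersetWeight_consCut {n b : ℕ} (B : Finset ℕ) (hb : b + 1 < n) :
    supersetWeight n (consCut b B) = supersetWeight (b + 1) ∅ * supersetWeight (n - (b + 1)) B := by
  induction n using Nat.strong_induction_on generalizing b with
  | _ n ih =>
  set S := supersetWeight (n - (b + 1)) B
  have term (t : ℕ) : (∑ A ∈ (range (n - (t + 1) - 1)).powerset with consCut b B ⊆ consCut t A,
      cutWeight (n - (t + 1)) A) = if t < b then supersetWeight (b - t) ∅ * S
        else if t = b then S else 0 := by
    rcases lt_trichotomy t b with htb | rfl | htb
    · simp only [consCut_subset_consCut_iff, htb, htb.ne, false_and, true_and, false_or,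
        if_true]
      rw [← supersetWeight, ih _ (by omega) (by omega)]
      congr 2 <;> omega
    · simp [consCut_subset_consCut_iff, S, supersetWeight]
    · have : ¬ t < b := by omega
      simp [consCut_subset_consCut_iff, htb.ne', this]
  obtain ⟨k, hk⟩ : ∃ k, n - 1 = b + 1 + k := ⟨n - 1 - (b + 1), by omega⟩
  rw [supersetWeight_eq_add_sum, if_neg (ne_empty_of_mem (mem_consCut_self b B)), zero_add, hk,
    sum_range_add, sum_range_succ, supersetWeight_empty_eq_add_sum (b + 1), Nat.add_sub_cancel,
    add_mul, sum_mul]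
  have tail : ∀ x ∈ range k, (b + 1 + x) * ∑ A ∈ (range (n - (b + 1 + x + 1) - 1)).powerset
      with consCut b B ⊆ consCut (b + 1 + x) A, cutWeight (n - (b + 1 + x + 1)) A = 0 := by
    intro x _
    rw [term, if_neg (by omega), if_neg (by omega), mul_zero]
  have head : ∀ t ∈ range b, t * ∑ A ∈ (range (n - (t + 1) - 1)).powerset
      with consCut b B ⊆ consCut t A, cutWeight (n - (t + 1)) A
        = t * supersetWeight (b + 1 - (t + 1)) ∅ * S := by
    intro t ht
    rw [term, if_pos (mem_range.1 ht), Nat.add_sub_add_right, mul_assoc]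
  rw [sum_congr rfl tail, sum_congr rfl head, term, if_neg (lt_irrefl b), if_pos rfl,
    sum_const_zero]
  ring

/-- For a cut set `B ⊆ {0, …, n - 2}` with `2 ≤ n`: no block of its composition is a
singleton. -/
def NoSingletonBlock (n : ℕ) (B : Finset ℕ) : Prop :=
  ∀ i ∈ B, 0 < i ∧ i + 2 < n ∧ i + 1 ∉ B

lemma noSingletonBlock_consCut_iff {n b : ℕ} {B : Finset ℕ} :
    NoSingletonBlock n (consCut b B) ↔ 0 < b ∧ b + 2 < n ∧ NoSingletonBlock (n - (b + 1)) B := by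
  have h0 : b + 1 ∈ consCut b B ↔ 0 ∈ B := by simpa using add_mem_consCut (x := 0)
  have h1 (x : ℕ) : x + (b + 1) + 1 ∈ consCut b B ↔ x + 1 ∈ B := by
    rw [add_right_comm]
    exact add_mem_consCut
  simp only [NoSingletonBlock, forall_mem_consCut, h0, h1]
  constructor
  · rintro ⟨⟨hb, hbn, hB0⟩, hB⟩
    exact ⟨hb, hbn, fun x hx => ⟨Nat.pos_of_ne_zero fun h => hB0 (h ▸ hx),
      by have := (hB x hx).2.1; omega, (hB x hx).2.2⟩⟩
  · rintro ⟨hb, hbn, hB⟩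
    exact ⟨⟨hb, hbn, fun h => (hB 0 h).1.false⟩, fun x hx =>
      ⟨by omega, by have := (hB x hx).2.1; omega, (hB x hx).2.2⟩⟩

-- Stated with `4 ^ #B` on the left because `2 ^ (n - 2 - 2 * #B)` would hide a truncated
-- subtraction.
lemma supersetWeight_mul_four_pow {n : ℕ} {B : Finset ℕ} (hn : 2 ≤ n) (hB : B ⊆ range (n - 1)) :
    supersetWeight n B * 4 ^ #B = if NoSingletonBlock n B then 2 ^ (n - 2) else 0 := by
  induction n using Nat.strong_induction_on generalizing B with
  | _ n ih =>
  rcases B.eq_empty_or_nonempty with rfl | hne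
  · simp [supersetWeight_empty hn, NoSingletonBlock]
  obtain ⟨b, B, rfl⟩ := exists_eq_consCut hne
  rw [consCut_subset_range_iff] at hB
  rw [supersetWeight_consCut B (by omega), card_consCut, noSingletonBlock_consCut_iff]
  rcases Nat.eq_zero_or_pos b with rfl | hb
  · simp [supersetWeight_one]
  rcases (show b + 2 = n ∨ b + 2 < n by omega) with hbn | hbn
  · have : ¬ b + 2 < n := by omega
    simp [show n - (b + 1) = 1 by omega, supersetWeight_one, this]
  have hB' : B ⊆ range (n - (b + 1) - 1) := by rw [Nat.sub_right_comm]; exact hB.2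
  calc supersetWeight (b + 1) ∅ * supersetWeight (n - (b + 1)) B * 4 ^ (#B + 1)
      = 2 ^ (b - 1) * 4 * (supersetWeight (n - (b + 1)) B * 4 ^ #B) := by
        rw [supersetWeight_empty (by omega), show b + 1 - 2 = b - 1 by omega]
        ring
    _ = _ := by
      rw [ih _ (by omega) (by omega) hB', mul_ite, mul_zero]
      simp only [hb, hbn, true_and]
      congr 1
      rw [show n - 2 = (b - 1) + 2 + (n - (b + 1) - 2) by omega, pow_add, pow_add]
      norm_num

section Ascents

variable {n : ℕ} (π : Equiv.Perm (Fin n))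

noncomputable def ascSet : Finset ℕ := (range (n - 1)).filter (Asc π)

variable {π}

lemma mem_ascSet {i : ℕ} : i ∈ ascSet π ↔ Asc π i := by
  rw [ascSet, mem_filter, mem_range]
  exact and_iff_right_of_imp fun ⟨h, _⟩ => by omega

lemma ascSet_subset_range : ascSet π ⊆ range (n - 1) := filter_subset _ _

lemma desc_iff_not_asc {i : ℕ} (h : i + 1 < n) : Desc π i ↔ ¬ Asc π i := by
  have hne : π ⟨i + 1, h⟩ ≠ π ⟨i, by omega⟩ := by simp
  simp only [Asc, Desc, h, exists_true_left, not_lt]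
  exact ⟨le_of_lt, fun hle => lt_of_le_of_ne hle hne⟩

lemma noSingletonBlock_ascSet_iff (hn : 2 ≤ n) :
    NoSingletonBlock n (ascSet π) ↔ NoDoubleAsc π ∧ Desc π 0 ∧ Desc π (n - 2) := by
  simp only [NoSingletonBlock, mem_ascSet, NoDoubleAsc, desc_iff_not_asc (show 0 + 1 < n by omega),
    desc_iff_not_asc (show n - 2 + 1 < n by omega)]
  constructor
  · intro h
    exact ⟨fun i hi => (h i hi.1).2.2 hi.2, fun h0 => (h 0 h0).1.false,
      fun h2 => by have := (h _ h2).2.1; omega⟩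
  · rintro ⟨hasc, h0, h2⟩ i hi
    refine ⟨Nat.pos_of_ne_zero fun h => h0 (h ▸ hi), ?_, fun hi1 => hasc i ⟨hi, hi1⟩⟩
    have := hi.1
    rcases (show i + 2 < n ∨ i = n - 2 by omega) with h | rfl
    · exact h
    · exact absurd hi h2

lemma dd_add_two_mul_card_ascSet (hn : 2 ≤ n) (h : NoSingletonBlock n (ascSet π)) :
    dd π + 2 * #(ascSet π) = n - 2 := by
  have h0 : ¬ Asc π 0 := fun h0 => (h 0 (mem_ascSet.2 h0)).1.false
  have hlast : ¬ Asc π (n - 2) := fun h2 => by have := (h _ (mem_ascSet.2 h2)).2.1; omega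
  have hdd : dd π = #((range (n - 2)).filter fun i => Desc π i ∧ Desc π (i + 1)) := by
    rw [dd]
    congr 1
    ext i
    simp only [mem_filter, mem_range]
    exact ⟨fun ⟨_, hi, hi1⟩ => ⟨by have := hi1.1; omega, hi, hi1⟩,
      fun ⟨_, hi, hi1⟩ => ⟨by omega, hi, hi1⟩⟩
  have hasc : #(ascSet π) = ∑ i ∈ range (n - 2), if Asc π i then 1 else 0 := by
    rw [ascSet, card_filter, show n - 1 = n - 2 + 1 by omega, sum_range_succ, if_neg hlast,
      add_zero]
  have hasc' : #(ascSet π) = ∑ i ∈ range (n - 2), if Asc π (i + 1) then 1 else 0 := by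
    rw [ascSet, card_filter, show n - 1 = n - 2 + 1 by omega, sum_range_succ', if_neg h0,
      add_zero]
  have hone : ∀ i ∈ range (n - 2), ((if Desc π i ∧ Desc π (i + 1) then 1 else 0) +
      (if Asc π i then 1 else 0)) + (if Asc π (i + 1) then 1 else 0) = 1 := by
    intro i hi
    rw [mem_range] at hi
    have hsep : ¬ (Asc π i ∧ Asc π (i + 1)) := fun ⟨ha, ha1⟩ => (h i (mem_ascSet.2 ha)).2.2
      (mem_ascSet.2 ha1)
    rw [desc_iff_not_asc (by omega), desc_iff_not_asc (by omega)]
    by_cases ha : Asc π i <;> by_cases ha1 : Asc π (i + 1) <;> simp_all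
  rw [hdd, card_filter, two_mul, ← add_assoc]
  nth_rw 1 [hasc]
  rw [hasc', ← sum_add_distrib, ← sum_add_distrib,
    sum_congr rfl hone, sum_const, card_range, smul_eq_mul, mul_one]

lemma supersetWeight_ascSet (hn : 2 ≤ n) :
    supersetWeight n (ascSet π)
      = if NoDoubleAsc π ∧ Desc π 0 ∧ Desc π (n - 2) then 2 ^ dd π else 0 := by
  have key := supersetWeight_mul_four_pow hn (ascSet_subset_range (π := π))
  by_cases h : NoSingletonBlock n (ascSet π)
  · rw [if_pos h, ← dd_add_two_mul_card_ascSet hn h, pow_add, pow_mul] at key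
    rw [if_pos ((noSingletonBlock_ascSet_iff hn).1 h)]
    exact Nat.eq_of_mul_eq_mul_right (by positivity) key
  · rw [if_neg h, mul_eq_zero] at key
    rw [if_neg (mt (noSingletonBlock_ascSet_iff hn).2 h)]
    exact key.resolve_right (by positivity)

end Ascents

section DecPrefix

variable {k m : ℕ} {s : Finset (Fin (k + m))}

lemma card_compl_of_card_eq (hs : #s = k) : #sᶜ = m := by
  rw [card_compl, hs, Fintype.card_fin, Nat.add_sub_cancel_left]

/-- The permutation whose first `k` values are the elements of `s` in decreasing order and
whose last `m` values are the elements of `sᶜ`, in the relative order of `σ`. -/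
noncomputable def decPrefixPerm (hs : #s = k) (σ : Equiv.Perm (Fin m)) : Equiv.Perm (Fin (k + m)) :=
  finSumFinEquiv.symm.trans <|
    (Equiv.sumCongr (Fin.revPerm.trans (s.orderIsoOfFin hs).toEquiv)
      (σ.trans ((sᶜ.orderIsoOfFin (card_compl_of_card_eq hs)).toEquiv.trans
        (Equiv.subtypeEquivRight fun _ => mem_compl)))).trans (Equiv.sumCompl (· ∈ s))

variable (hs : #s = k) (σ : Equiv.Perm (Fin m))

lemma decPrefixPerm_castAdd (i : Fin k) :
    decPrefixPerm hs σ (Fin.castAdd m i) = s.orderEmbOfFin hs i.rev := by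
  simp [decPrefixPerm]

lemma decPrefixPerm_natAdd (j : Fin m) :
    decPrefixPerm hs σ (Fin.natAdd k j) = sᶜ.orderEmbOfFin (card_compl_of_card_eq hs) (σ j) := by
  simp [decPrefixPerm, Equiv.subtypeEquivRight, Equiv.subtypeEquiv, coe_orderIsoOfFin_apply]

variable {hs σ}

lemma not_asc_decPrefixPerm {p : ℕ} (hp : p + 1 < k) : ¬ Asc (decPrefixPerm hs σ) p := by
  rintro ⟨h, hlt⟩
  have e (q : ℕ) (hq : q < k) : (⟨q, by omega⟩ : Fin (k + m)) = Fin.castAdd m ⟨q, hq⟩ := rfl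
  rw [e p (by omega), e (p + 1) hp, decPrefixPerm_castAdd, decPrefixPerm_castAdd,
    OrderEmbedding.lt_iff_lt, Fin.rev_lt_rev, Fin.mk_lt_mk] at hlt
  omega

lemma asc_decPrefixPerm_add {j : ℕ} : Asc (decPrefixPerm hs σ) (k + j) ↔ Asc σ j := by
  by_cases hj : j + 1 < m
  · have e1 : (⟨k + j, by omega⟩ : Fin (k + m)) = Fin.natAdd k ⟨j, by omega⟩ := rfl
    have e2 : (⟨k + j + 1, by omega⟩ : Fin (k + m)) = Fin.natAdd k ⟨j + 1, hj⟩ := rfl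
    simp only [Asc, hj, show k + j + 1 < k + m by omega, exists_true_left, e1, e2,
      decPrefixPerm_natAdd, OrderEmbedding.lt_iff_lt]
  · exact iff_of_false (fun ⟨h, _⟩ => hj (by omega)) fun ⟨h, _⟩ => hj h

lemma decPrefixPerm_inj {s' : Finset (Fin (k + m))} {hs' : #s' = k} {σ' : Equiv.Perm (Fin m)}
    (h : decPrefixPerm hs σ = decPrefixPerm hs' σ') : s = s' ∧ σ = σ' := by
  have hs_eq : s = s' := by
    have hfun : ⇑(s.orderEmbOfFin hs) = ⇑(s'.orderEmbOfFin hs') := funext fun i => by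
      simpa [decPrefixPerm_castAdd] using congrArg (· (Fin.castAdd m i.rev)) h
    rw [← coe_inj, ← range_orderEmbOfFin s hs, ← range_orderEmbOfFin s' hs', hfun]
  subst hs_eq
  refine ⟨rfl, Equiv.ext fun j => (sᶜ.orderEmbOfFin (card_compl_of_card_eq hs)).injective ?_⟩
  simpa [decPrefixPerm_natAdd] using congrArg (· (Fin.natAdd k j)) h

end DecPrefix

lemma ascSet_decPrefixPerm_subset_consCut_iff {k m : ℕ} {s : Finset (Fin (k + 1 + m))}
    {hs : #s = k + 1} {σ : Equiv.Perm (Fin m)} {A : Finset ℕ} :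
    ascSet (decPrefixPerm hs σ) ⊆ consCut k A ↔ ascSet σ ⊆ A := by
  constructor
  · intro h j hj
    have := h (mem_ascSet.2 (asc_decPrefixPerm_add.2 (mem_ascSet.1 hj)))
    rwa [add_comm, add_mem_consCut] at this
  · intro h p hp
    rw [mem_ascSet] at hp
    rcases lt_trichotomy p k with hpk | rfl | hpk
    · exact absurd hp (not_asc_decPrefixPerm (by omega))
    · exact mem_consCut_self _ _
    · obtain ⟨j, rfl⟩ : ∃ j, p = k + 1 + j := ⟨p - (k + 1), by omega⟩
      rw [asc_decPrefixPerm_add, ← mem_ascSet] at hp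
      rw [add_comm, add_mem_consCut]
      exact h hp

lemma exists_decPrefixPerm_eq {k m : ℕ} (π : Equiv.Perm (Fin (k + 1 + m)))
    (hπ : ∀ p < k, ¬ Asc π p) :
    ∃ (s : Finset (Fin (k + 1 + m))) (hs : #s = k + 1) (σ : Equiv.Perm (Fin m)),
      decPrefixPerm hs σ = π := by
  set f : Fin (k + 1) → Fin (k + 1 + m) := fun i => π (Fin.castAdd m i)
  have hanti : StrictAnti f := Fin.strictAnti_iff_succ_lt.2 fun i =>
    ((desc_iff_not_asc (by omega)).2 (hπ i i.2)).2
  set s := univ.map ⟨f, hanti.injective⟩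
  have hs : #s = k + 1 := by simp [s]
  have hhead : ∀ i, s.orderEmbOfFin hs i.rev = f i := by
    have := orderEmbOfFin_unique hs (f := fun i => f i.rev) (fun i => by simp [s])
      fun a b hab => hanti (Fin.rev_lt_rev.2 hab)
    intro i
    simpa using (congrFun this i.rev).symm
  have hc := card_compl_of_card_eq hs
  have hmem : ∀ j, π (Fin.natAdd (k + 1) j) ∈ sᶜ := by
    intro j
    rw [mem_compl]
    intro hj
    obtain ⟨i, -, hi⟩ := mem_map.1 hj
    have := Fin.val_eq_of_eq (π.injective hi)
    simp only [Fin.val_castAdd, Fin.val_natAdd] at this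
    omega
  set g : Fin m → Fin m := fun j => (sᶜ.orderIsoOfFin hc).symm ⟨_, hmem j⟩
  have hg : Function.Injective g := fun a b hab => by
    simpa [g] using (sᶜ.orderIsoOfFin hc).symm.injective hab
  set σ := Equiv.ofBijective g (Finite.injective_iff_bijective.1 hg)
  have htail : ∀ j, sᶜ.orderEmbOfFin hc (σ j) = π (Fin.natAdd (k + 1) j) := fun j => by
    simp [σ, g, ← coe_orderIsoOfFin_apply]
  refine ⟨s, hs, σ, Equiv.ext fun x => Fin.addCases (fun i => ?_) (fun j => ?_) x⟩
  · rw [decPrefixPerm_castAdd, hhead]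
  · rw [decPrefixPerm_natAdd, htail]

noncomputable def permsAscIn (n : ℕ) (A : Finset ℕ) : Finset (Equiv.Perm (Fin n)) :=
  univ.filter fun π => ascSet π ⊆ A

lemma card_permsAscIn_consCut (k m : ℕ) (A : Finset ℕ) :
    #(permsAscIn (k + 1 + m) (consCut k A)) = (k + 1 + m).choose (k + 1) * #(permsAscIn m A) := by
  have hchoose : #(powersetCard (k + 1) (univ : Finset (Fin (k + 1 + m))))
      = (k + 1 + m).choose (k + 1) := by
    rw [card_powersetCard, card_univ, Fintype.card_fin]
  rw [← hchoose, ← card_product]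
  symm
  refine card_bij (fun x hx => decPrefixPerm (mem_powersetCard_univ.1 (mem_product.1 hx).1) x.2)
    ?_ ?_ ?_
  · rintro ⟨s, σ⟩ hx
    simp only [permsAscIn, mem_filter, mem_univ, true_and, mem_product] at hx ⊢
    exact ascSet_decPrefixPerm_subset_consCut_iff.2 hx.2
  · rintro ⟨s, σ⟩ _ ⟨s', σ'⟩ _ h
    obtain ⟨rfl, rfl⟩ := decPrefixPerm_inj h
    rfl
  · intro π hπ
    simp only [permsAscIn, mem_filter, mem_univ, true_and] at hπ
    obtain ⟨s, hs, σ, rfl⟩ := exists_decPrefixPerm_eq π fun p hp hasc => by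
      have := mem_consCut.1 (hπ (mem_ascSet.2 hasc))
      omega
    refine ⟨(s, σ), ?_, rfl⟩
    simp only [mem_product, mem_powersetCard_univ, permsAscIn, mem_filter, mem_univ, true_and]
    exact ⟨hs, ascSet_decPrefixPerm_subset_consCut_iff.1 hπ⟩

lemma card_permsAscIn_empty (n : ℕ) : #(permsAscIn n ∅) = 1 := by
  cases n with
  | zero => rfl
  | succ k =>
    have h := card_permsAscIn_consCut k 0 ∅
    have hempty : permsAscIn (k + 1) (consCut k ∅) = permsAscIn (k + 1) ∅ := by
      refine filter_congr fun π _ => ⟨fun h i hi => ?_, fun h => h.trans (empty_subset _)⟩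
      have hik := mem_range.1 (ascSet_subset_range hi)
      rcases mem_consCut.1 (h hi) with rfl | ⟨_, h'⟩
      · omega
      · simp at h'
    rw [Nat.add_zero, hempty, Nat.choose_self, one_mul] at h
    rw [h]
    rfl

lemma card_filter_fixedPoints_eq {n : ℕ} (F : Finset (Fin n)) :
    #{σ : Equiv.Perm (Fin n) | univ.filter (fun x => σ x = x) = F} = numDerangements (n - #F) :=
  calc #{σ : Equiv.Perm (Fin n) | univ.filter (fun x => σ x = x) = F}
      = Fintype.card {σ : Equiv.Perm (Fin n) // ∀ a, ¬a ∉ F ↔ a ∈ Function.fixedPoints σ} := by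
        rw [Fintype.card_subtype]
        congr 1
        refine filter_congr fun σ _ => ?_
        simp [Finset.ext_iff, Function.IsFixedPt, eq_comm]
    _ = numDerangements (n - #F) := by
        rw [← Fintype.card_congr (derangements.subtypeEquiv (· ∉ F)),
          card_derangements_eq_numDerangements, Fintype.card_subtype_compl, Fintype.card_fin,
          Fintype.card_coe]

lemma sum_choose_mul_numDerangements (n : ℕ) :
    ∑ j ∈ range (n + 1), n.choose j * numDerangements (n - j) = n ! := by
  calc ∑ j ∈ range (n + 1), n.choose j * numDerangements (n - j)
      = ∑ F ∈ (univ : Finset (Fin n)).powerset, numDerangements (n - #F) := by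
        rw [sum_powerset_apply_card (fun j => numDerangements (n - j)), card_univ,
          Fintype.card_fin]
        simp
    _ = #(univ : Finset (Equiv.Perm (Fin n))) := by
        rw [card_eq_sum_card_fiberwise (f := fun σ : Equiv.Perm (Fin n) =>
          univ.filter fun x => σ x = x) fun σ _ => mem_powerset.2 (filter_subset _ _)]
        exact sum_congr rfl fun F _ => (card_filter_fixedPoints_eq F).symm
    _ = n ! := by rw [card_univ, Fintype.card_perm, Fintype.card_fin]

lemma numDerangements_eq_sum {n : ℕ} (hn : 1 ≤ n) :
    numDerangements n = ∑ t ∈ range n, t * n.choose (t + 1) * numDerangements (n - (t + 1)) := by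
  obtain ⟨n, rfl⟩ : ∃ n', n = n' + 1 := ⟨n - 1, by omega⟩
  have hall := sum_choose_mul_numDerangements (n + 1)
  rw [sum_range_succ', Nat.choose_zero_right, one_mul, Nat.sub_zero] at hall
  have hweighted : ∑ t ∈ range (n + 1),
      (t + 1) * (n + 1).choose (t + 1) * numDerangements (n + 1 - (t + 1)) = (n + 1)! := by
    have h (t : ℕ) : (t + 1) * (n + 1).choose (t + 1) * numDerangements (n + 1 - (t + 1))
        = (n + 1) * (n.choose t * numDerangements (n - t)) := by
      rw [mul_comm (t + 1), ← Nat.add_one_mul_choose_eq, Nat.add_sub_add_right]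
      ring
    simp only [h, ← mul_sum, sum_choose_mul_numDerangements, Nat.factorial_succ]
  simp only [add_mul, one_mul, sum_add_distrib] at hweighted
  omega

lemma sum_cutWeight_mul_card_permsAscIn {n : ℕ} (hn : 1 ≤ n) :
    ∑ A ∈ (range (n - 1)).powerset, cutWeight n A * #(permsAscIn n A) = numDerangements n := by
  induction n using Nat.strong_induction_on with
  | _ n ih =>
  have block : ∀ t ∈ range (n - 1), ∑ A ∈ (range (n - 1 - (t + 1))).powerset,
      cutWeight n (consCut t A) * #(permsAscIn n (consCut t A))
        = t * n.choose (t + 1) * numDerangements (n - (t + 1)) := by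
    intro t ht
    obtain ⟨m, rfl⟩ : ∃ m, n = t + 1 + m := ⟨n - (t + 1), by have := mem_range.1 ht; omega⟩
    have hm : 1 ≤ m := by have := mem_range.1 ht; omega
    simp only [cutWeight_consCut, card_permsAscIn_consCut, Nat.add_sub_cancel_left,
      Nat.sub_right_comm _ 1]
    rw [← ih m (by omega) hm, mul_sum]
    exact sum_congr rfl fun _ _ => by ring
  rw [sum_powerset_range_eq_add_sum_consCut, cutWeight_empty, card_permsAscIn_empty, mul_one,
    sum_congr rfl block, numDerangements_eq_sum hn]
  obtain ⟨n, rfl⟩ : ∃ n', n = n' + 1 := ⟨n - 1, by omega⟩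
  rw [sum_range_succ, Nat.choose_self, Nat.sub_self, numDerangements_zero, Nat.add_sub_cancel]
  ring

lemma sum_cutWeight_mul_card_permsAscIn_eq_sum_supersetWeight (n : ℕ) :
    ∑ A ∈ (range (n - 1)).powerset, cutWeight n A * #(permsAscIn n A)
      = ∑ π : Equiv.Perm (Fin n), supersetWeight n (ascSet π) := by
  simp only [permsAscIn, card_filter, mul_sum, supersetWeight, sum_filter, mul_ite, mul_one,
    mul_zero]
  exact sum_comm

/-- For n ≥ 2, the number of derangements of [n] equals Σ 2^{dd(π)} over permutations
with no double ascents whose descent word starts and ends with a descent. -/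
theorem numDerangements_eq_alphaBB (n : ℕ) (hn : 2 ≤ n) :
    numDerangements n = alphaBB n := by
  rw [← sum_cutWeight_mul_card_permsAscIn (by omega : 1 ≤ n),
    sum_cutWeight_mul_card_permsAscIn_eq_sum_supersetWeight, alphaBB, sum_filter]
  exact sum_congr rfl fun π _ => supersetWeight_ascSet hn
end

section
/- Let α_n(b,b) = Σ 2^{dd(π)} over permutations of [n] with no double ascents whose descent word starts and ends with a descent. Then for n ≥ 3 the recursion α_n(b,b) = n · α_{n−1}(b,b) + (−1)^n holds. -/
open Finset
open scoped Classical

namespace AlphaAux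

/-- Prepend the value `p` to the pattern permutation `e`. -/
def prep {n : ℕ} (p : Fin (n + 1)) (e : Equiv.Perm (Fin n)) : Equiv.Perm (Fin (n + 1)) :=
  ((finSuccEquiv n).trans e.optionCongr).trans (finSuccEquiv' p).symm

@[simp] lemma prep_zero {n : ℕ} (p : Fin (n + 1)) (e : Equiv.Perm (Fin n)) :
    prep p e 0 = p := by
  simp [prep, Equiv.trans_apply]

@[simp] lemma prep_succ {n : ℕ} (p : Fin (n + 1)) (e : Equiv.Perm (Fin n)) (x : Fin n) :
    prep p e x.succ = p.succAbove (e x) := by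
  simp [prep, Equiv.trans_apply, finSuccEquiv'_symm_some]

lemma prep_bijective {n : ℕ} :
    Function.Bijective (fun q : Fin (n + 1) × Equiv.Perm (Fin n) => prep q.1 q.2) := by
  rw [Fintype.bijective_iff_injective_and_card]
  constructor
  · rintro ⟨p, e⟩ ⟨p', e'⟩ h
    simp only at h
    have hp : p = p' := by
      have := congrArg (fun f : Equiv.Perm (Fin (n+1)) => f 0) h
      simpa using this
    subst hp
    have he : e = e' := by
      apply Equiv.ext
      intro x
      have := congrArg (fun f : Equiv.Perm (Fin (n+1)) => f x.succ) h
      simp only [prep_succ] at this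
      exact Fin.succAbove_right_injective this
    rw [he]
  · simp [Fintype.card_perm, Fintype.card_prod, Nat.factorial_succ]

lemma asc_iff_not_desc {N : ℕ} (e : Equiv.Perm (Fin N)) (i : ℕ) (h : i + 1 < N) :
    Asc e i ↔ ¬ Desc e i := by
  constructor
  · rintro ⟨h1, hlt⟩ ⟨h2, hlt2⟩
    exact absurd hlt2 (lt_asymm hlt)
  · intro hnd
    refine ⟨h, ?_⟩
    rcases lt_trichotomy (e ⟨i, Nat.lt_of_succ_lt h⟩) (e ⟨i + 1, h⟩) with hl | heq | hg
    · exact hl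
    · have := e.injective heq
      simp only [Fin.mk.injEq] at this
      omega
    · exact absurd ⟨h, hg⟩ hnd

variable {m : ℕ} (p : Fin (m + 3)) (e : Equiv.Perm (Fin (m + 2)))

lemma desc_succ_iff (i : ℕ) :
    Desc (prep p e) (i + 1) ↔ Desc e i := by
  have key : ∀ h : i + 1 + 1 < m + 3,
      ((prep p e) ⟨i + 1 + 1, h⟩ < (prep p e) ⟨i + 1, Nat.lt_of_succ_lt h⟩)
      ↔ ∀ hb : i + 1 < m + 2, e ⟨i + 1, hb⟩ < e ⟨i, Nat.lt_of_succ_lt hb⟩ := by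
    intro h
    have hb : i + 1 < m + 2 := by omega
    have h2 : (⟨i + 1 + 1, h⟩ : Fin (m + 3)) = Fin.succ ⟨i + 1, hb⟩ := rfl
    have h1 : (⟨i + 1, Nat.lt_of_succ_lt h⟩ : Fin (m + 3)) =
        Fin.succ ⟨i, Nat.lt_of_succ_lt hb⟩ := rfl
    rw [h1, h2, prep_succ, prep_succ, Fin.succAbove_lt_succAbove_iff]
    exact ⟨fun hlt _ => hlt, fun hh => hh hb⟩
  constructor
  · rintro ⟨h, hlt⟩
    exact ⟨by omega, (key h).1 hlt _⟩
  · rintro ⟨h, hlt⟩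
    exact ⟨by omega, (key (by omega)).2 (fun _ => hlt)⟩

lemma asc_succ_iff (i : ℕ) :
    Asc (prep p e) (i + 1) ↔ Asc e i := by
  by_cases hb : i + 1 < m + 2
  · rw [asc_iff_not_desc _ (i + 1) (by omega), asc_iff_not_desc e i hb, desc_succ_iff]
  · constructor
    · rintro ⟨h, -⟩; omega
    · rintro ⟨h, -⟩; omega

lemma desc_zero_iff :
    Desc (prep p e) 0 ↔ ((e 0 : ℕ) < (p : ℕ)) := by
  have key : ∀ h : 0 + 1 < m + 3,
      ((prep p e) ⟨0 + 1, h⟩ < (prep p e) ⟨0, Nat.lt_of_succ_lt h⟩)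
      ↔ ((e 0 : ℕ) < (p : ℕ)) := by
    intro h
    have h1 : (⟨0 + 1, h⟩ : Fin (m + 3)) = Fin.succ (0 : Fin (m + 2)) := by
      apply Fin.ext; simp
    have h0 : (⟨0, Nat.lt_of_succ_lt h⟩ : Fin (m + 3)) = 0 := by
      apply Fin.ext; simp
    rw [h1, h0, prep_succ, prep_zero, Fin.succAbove_lt_iff_castSucc_lt]
    simp [Fin.lt_def]
  constructor
  · rintro ⟨h, hlt⟩
    exact (key h).1 hlt
  · intro hlt
    exact ⟨by omega, (key (by omega)).2 hlt⟩

lemma dd_prep :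
    dd (prep p e) = dd e + (if ((e 0 : ℕ) < (p : ℕ) ∧ Desc e 0) then 1 else 0) := by
  unfold dd
  rw [Finset.card_filter, Finset.card_filter, Finset.sum_range_succ']
  congr 1
  · apply Finset.sum_congr rfl
    intro i _
    apply if_congr _ rfl rfl
    exact and_congr (desc_succ_iff p e i) (desc_succ_iff p e (i + 1))
  · apply if_congr _ rfl rfl
    exact and_congr (desc_zero_iff p e) (desc_succ_iff p e 0)

lemma nda_prep :
    NoDoubleAsc (prep p e) ↔ NoDoubleAsc e ∧ (((e 0 : ℕ) < (p : ℕ)) ∨ Desc e 0) := by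
  constructor
  · intro hh
    refine ⟨fun i hc => ?_, ?_⟩
    · exact hh (i + 1) ⟨(asc_succ_iff p e i).2 hc.1, (asc_succ_iff p e (i + 1)).2 hc.2⟩
    · by_contra hcon
      push_neg at hcon
      obtain ⟨hnp, hnd⟩ := hcon
      apply hh 0
      constructor
      · exact (asc_iff_not_desc _ 0 (by omega)).2
          (fun hd => absurd ((desc_zero_iff p e).1 hd) (by omega))
      · exact (asc_succ_iff p e 0).2 ((asc_iff_not_desc e 0 (by omega)).2 hnd)
  · rintro ⟨hn, hor⟩ i ⟨h1, h2⟩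
    cases i with
    | zero =>
      have hae : Asc e 0 := (asc_succ_iff p e 0).1 h2
      have hnd : ¬ Desc e 0 := by
        intro hd
        exact absurd hae ((fun h => by
          rw [asc_iff_not_desc e 0 (by omega)]; exact fun ha => ha h) hd)
      have hnp : ¬ Desc (prep p e) 0 := by
        rw [asc_iff_not_desc _ 0 (by omega)] at h1
        exact h1
      rw [desc_zero_iff] at hnp
      rcases hor with h | h
      · exact hnp h
      · exact hnd h
    | succ j =>
      exact hn j ⟨(asc_succ_iff p e j).1 h1, (asc_succ_iff p e (j + 1)).1 h2⟩

end AlphaAux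

namespace AlphaAux

/-- Weighted transfer sum at level `m + 2`. -/
noncomputable def T (m : ℕ) (u v : ℕ → ℤ) : ℤ :=
  ∑ e : Equiv.Perm (Fin (m + 2)),
    if NoDoubleAsc e ∧ Desc e m then
      (if Desc e 0 then v (e 0 : ℕ) else u (e 0 : ℕ)) * 2 ^ dd e
    else 0

lemma T_congr (m : ℕ) {u v u' v' : ℕ → ℤ}
    (hu : ∀ k < m + 2, u k = u' k) (hv : ∀ k < m + 2, v k = v' k) :
    T m u v = T m u' v' := by
  unfold T
  apply Finset.sum_congr rfl
  intro e _
  have h0 : ((e 0 : Fin (m + 2)) : ℕ) < m + 2 := (e 0).isLt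
  rw [hu _ h0, hv _ h0]

lemma T_sub (m : ℕ) (u v : ℕ → ℤ) (c : ℤ) :
    T m u v - c * T m (fun _ => 0) (fun _ => 1) = T m u (fun k => v k - c) := by
  unfold T
  rw [Finset.mul_sum, ← Finset.sum_sub_distrib]
  apply Finset.sum_congr rfl
  intro e _
  by_cases h1 : NoDoubleAsc e ∧ Desc e m
  · rw [if_pos h1, if_pos h1, if_pos h1]
    by_cases h2 : Desc e 0
    · rw [if_pos h2, if_pos h2, if_pos h2]; ring
    · rw [if_neg h2, if_neg h2, if_neg h2]; ring
  · rw [if_neg h1, if_neg h1, if_neg h1]; ring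

lemma alphaBB_eq_T (m : ℕ) :
    ((∑ π ∈ Finset.univ.filter
      (fun π : Equiv.Perm (Fin (m + 2)) =>
          NoDoubleAsc π ∧ Desc π 0 ∧ Desc π (m + 2 - 2)), 2 ^ dd π : ℕ) : ℤ)
      = T m (fun _ => 0) (fun _ => 1) := by
  unfold T
  rw [Finset.sum_filter, Nat.cast_sum]
  apply Finset.sum_congr rfl
  intro e _
  have hm : m + 2 - 2 = m := by omega
  rw [hm]
  by_cases h1 : NoDoubleAsc e
  · by_cases h2 : Desc e 0
    · by_cases h3 : Desc e m
      · rw [if_pos ⟨h1, h2, h3⟩, if_pos ⟨h1, h3⟩, if_pos h2]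
        push_cast; ring
      · rw [if_neg (by tauto), if_neg (by tauto)]; simp
    · by_cases h3 : Desc e m
      · rw [if_neg (by tauto), if_pos ⟨h1, h3⟩, if_neg h2]; simp
      · rw [if_neg (by tauto), if_neg (by tauto)]; simp
  · rw [if_neg (by tauto), if_neg (by tauto)]; simp

lemma T_step (m : ℕ) (u v : ℕ → ℤ) :
    T (m + 1) u v =
      T m (fun k => ∑ q ∈ (range (m + 3)).filter (fun q => k < q), v q)
          (fun k => (∑ q ∈ (range (m + 3)).filter (fun q => q ≤ k), u q)
                    + 2 * ∑ q ∈ (range (m + 3)).filter (fun q => k < q), v q) := by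
  unfold T
  rw [← Fintype.sum_bijective _ (prep_bijective (n := m + 2)) _ _ (fun q => rfl)]
  rw [Fintype.sum_prod_type, Finset.sum_comm]
  apply Finset.sum_congr rfl
  intro e _
  by_cases hC : NoDoubleAsc e ∧ Desc e m
  · rw [if_pos hC]
    by_cases hD : Desc e 0
    · rw [if_pos hD]
      have hterm : ∀ p : Fin (m + 3),
          (if NoDoubleAsc (prep p e) ∧ Desc (prep p e) (m + 1) then
            (if Desc (prep p e) 0 then v ((prep p e) 0 : ℕ) else u ((prep p e) 0 : ℕ))
              * 2 ^ dd (prep p e) else 0)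
          = (if (e 0 : ℕ) < (p : ℕ) then v (p : ℕ) * 2 ^ (dd e + 1)
             else u (p : ℕ) * 2 ^ dd e) := by
        intro p
        rw [if_pos ?_]
        · rw [prep_zero, dd_prep]
          by_cases hlt : (e 0 : ℕ) < (p : ℕ)
          · rw [if_pos hlt, if_pos ((desc_zero_iff p e).2 hlt), if_pos ⟨hlt, hD⟩]
          · rw [if_neg hlt, if_neg (fun hd => hlt ((desc_zero_iff p e).1 hd)),
              if_neg (by tauto), add_zero]
        · refine ⟨(nda_prep p e).2 ⟨hC.1, Or.inr hD⟩, (desc_succ_iff p e m).2 hC.2⟩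
      rw [Finset.sum_congr rfl (fun p _ => hterm p)]
      rw [Fin.sum_univ_eq_sum_range
        (fun q => if (e 0 : ℕ) < q then v q * 2 ^ (dd e + 1) else u q * 2 ^ dd e)]
      rw [Finset.sum_ite]
      have hf2 : (range (m + 3)).filter (fun q => ¬ (e 0 : ℕ) < q)
          = (range (m + 3)).filter (fun q => q ≤ (e 0 : ℕ)) := by
        apply Finset.filter_congr; intro q _; simp [not_lt]
      rw [hf2, ← Finset.sum_mul, ← Finset.sum_mul]
      rw [pow_succ]
      ring
    · rw [if_neg hD]
      have hterm : ∀ p : Fin (m + 3),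
          (if NoDoubleAsc (prep p e) ∧ Desc (prep p e) (m + 1) then
            (if Desc (prep p e) 0 then v ((prep p e) 0 : ℕ) else u ((prep p e) 0 : ℕ))
              * 2 ^ dd (prep p e) else 0)
          = (if (e 0 : ℕ) < (p : ℕ) then v (p : ℕ) * 2 ^ dd e else 0) := by
        intro p
        by_cases hlt : (e 0 : ℕ) < (p : ℕ)
        · rw [if_pos ⟨(nda_prep p e).2 ⟨hC.1, Or.inl hlt⟩, (desc_succ_iff p e m).2 hC.2⟩]
          rw [prep_zero, dd_prep, if_pos ((desc_zero_iff p e).2 hlt), if_pos hlt,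
            if_neg (by tauto)]
          ring_nf
        · rw [if_neg hlt, if_neg ?_]
          rintro ⟨hnda, -⟩
          rcases ((nda_prep p e).1 hnda).2 with h | h
          · exact hlt h
          · exact hD h
      rw [Finset.sum_congr rfl (fun p _ => hterm p)]
      rw [Fin.sum_univ_eq_sum_range
        (fun q => if (e 0 : ℕ) < q then v q * 2 ^ dd e else 0)]
      rw [← Finset.sum_filter, ← Finset.sum_mul]
  · rw [if_neg hC]
    apply Finset.sum_eq_zero
    intro p _
    rw [if_neg]
    rintro ⟨hnda, hdm⟩
    exact hC ⟨((nda_prep p e).1 hnda).1, (desc_succ_iff p e m).1 hdm⟩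

end AlphaAux

namespace AlphaAux

lemma nda_two (e : Equiv.Perm (Fin 2)) : NoDoubleAsc e := by
  rintro i ⟨-, ⟨h2, -⟩⟩
  omega

lemma dd_two (e : Equiv.Perm (Fin 2)) : dd e = 0 := by
  unfold dd
  rw [Finset.card_eq_zero, Finset.filter_eq_empty_iff]
  rintro i - ⟨-, ⟨h2, -⟩⟩
  omega

lemma perm_two (e : Equiv.Perm (Fin 2)) : e = 1 ∨ e = Equiv.swap 0 1 := by
  revert e; decide

lemma T_zero (u v : ℕ → ℤ) : T 0 u v = v 1 := by
  unfold T
  have huniv : (Finset.univ : Finset (Equiv.Perm (Fin 2))) = {1, Equiv.swap 0 1} := by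
    symm
    apply Finset.eq_univ_iff_forall.2
    intro e
    rcases perm_two e with h | h <;> simp [h]
  rw [huniv, Finset.sum_pair (by decide)]
  have h1 : ¬ Desc (1 : Equiv.Perm (Fin 2)) 0 := by
    rintro ⟨h, hlt⟩
    simp only [Equiv.Perm.coe_one, id_eq] at hlt
    rw [Fin.lt_def] at hlt
    simp at hlt
  have h2 : Desc (Equiv.swap (0 : Fin 2) 1) 0 := ⟨by omega, by decide⟩
  rw [if_neg (by tauto), if_pos ⟨nda_two _, h2⟩, if_pos h2, dd_two]
  norm_num

/-- The magic coefficients. -/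
def lam (r m k : ℕ) : ℤ := (-1) ^ r * ((m : ℤ) - k) * ((r + k).choose k : ℤ)

def mu (r m k : ℕ) : ℤ :=
  if k = 0 then (-1) ^ r * ((m : ℤ) - 1)
  else lam (r + 1) (m - 1) (k - 1) - lam (r + 1) (m - 1) k

lemma choose_symm' {n a b : ℕ} (h : a + b = n) : n.choose a = n.choose b := by
  subst h
  rw [← Nat.choose_symm (show b ≤ a + b by omega)]
  congr 1
  omega

lemma FI1 (N k : ℕ) : (range N).filter (fun q => k < q) = Ico (k + 1) N := by
  ext q
  simp only [mem_filter, mem_range, mem_Ico]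
  omega

lemma FI2 (N k : ℕ) (h : k < N) : (range N).filter (fun q => q ≤ k) = range (k + 1) := by
  ext q
  simp only [mem_filter, mem_range]
  omega

lemma lam_self (r m : ℕ) : lam r m m = 0 := by
  unfold lam
  simp

lemma CI1 (r j k : ℕ) (hk : k < j + 2) :
    (∑ q ∈ (range (j + 3)).filter (fun q => k < q), mu r (j + 3) q)
      = lam (r + 1) (j + 2) k := by
  rw [FI1]
  have hmu : ∀ t : ℕ, mu r (j + 3) (t + 1)
      = lam (r + 1) (j + 2) t - lam (r + 1) (j + 2) (t + 1) := by
    intro t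
    unfold mu
    rw [if_neg (by omega)]
    simp
  rw [Finset.sum_Ico_eq_sum_range]
  have hd : j + 3 - (k + 1) = j + 2 - k := by omega
  rw [hd]
  have hterm : ∀ i : ℕ, mu r (j + 3) (k + 1 + i)
      = lam (r + 1) (j + 2) (k + i) - lam (r + 1) (j + 2) (k + (i + 1)) := by
    intro i
    have h1 : k + 1 + i = (k + i) + 1 := by omega
    have h2 : k + (i + 1) = (k + i) + 1 := by omega
    rw [h1, h2, hmu]
  rw [Finset.sum_congr rfl (fun i _ => hterm i)]
  rw [Finset.sum_range_sub' (fun i => lam (r + 1) (j + 2) (k + i))]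
  have : k + (j + 2 - k) = j + 2 := by omega
  rw [this, add_zero, lam_self, sub_zero]

lemma HS1 (r k : ℕ) : (∑ q ∈ range (k + 1), (r + q).choose q) = (r + k + 1).choose (r + 1) := by
  induction k with
  | zero => simp
  | succ k ih =>
    rw [Finset.sum_range_succ, ih]
    have hsymm : (r + k + 1).choose (k + 1) = (r + k + 1).choose r :=
      choose_symm' (by omega)
    have harg : r + (k + 1) = r + k + 1 := by omega
    rw [harg, hsymm, Nat.choose_succ_succ' (r + k + 1) r, add_comm]

lemma HS2 (r k : ℕ) :
    (∑ q ∈ range (k + 1), q * (r + q).choose q) = (r + 1) * (r + k + 1).choose (r + 2) := by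
  induction k with
  | zero =>
    simp [Nat.choose_eq_zero_of_lt (show r + 1 < r + 2 by omega)]
  | succ k ih =>
    rw [Finset.sum_range_succ, ih]
    have hkey : (k + 1) * (r + (k + 1)).choose (k + 1) = (r + 1) * (r + k + 1).choose (r + 1) := by
      have harg : r + (k + 1) = r + k + 1 := by omega
      rw [harg]
      have hsymm : (r + k + 1).choose (k + 1) = (r + k + 1).choose r :=
        choose_symm' (by omega)
      rw [hsymm]
      have := Nat.choose_succ_right_eq (r + k + 1) r
      have h2 : r + k + 1 - r = k + 1 := by omega
      rw [h2] at this
      calc (k + 1) * (r + k + 1).choose r = (r + k + 1).choose r * (k + 1) := by ring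
        _ = (r + k + 1).choose (r + 1) * (r + 1) := this.symm
        _ = (r + 1) * (r + k + 1).choose (r + 1) := by ring
    have harg2 : r + (k + 1) + 1 = (r + k + 1) + 1 := by omega
    rw [hkey, harg2, Nat.choose_succ_succ' (r + k + 1) (r + 1)]
    ring

lemma NK (r t : ℕ) :
    (t + 1) * (r + t + 2).choose (r + 1) = (r + 2) * (r + t + 2).choose (r + 2) := by
  have := Nat.choose_succ_right_eq (r + t + 2) (r + 1)
  have h2 : r + t + 2 - (r + 1) = t + 1 := by omega
  rw [h2] at this
  calc (t + 1) * (r + t + 2).choose (r + 1) = (r + t + 2).choose (r + 1) * (t + 1) := by ring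
    _ = (r + t + 2).choose (r + 2) * (r + 2) := this.symm
    _ = (r + 2) * (r + t + 2).choose (r + 2) := by ring

lemma CI2 (r j k : ℕ) (hk : k < j + 2) :
    (∑ q ∈ (range (j + 3)).filter (fun q => q ≤ k), lam r (j + 3) q)
      + 2 * lam (r + 1) (j + 2) k = mu (r + 1) (j + 2) k := by
  rw [FI2 _ _ (by omega)]
  cases k with
  | zero =>
    unfold lam mu
    simp only [if_pos rfl]
    rw [Finset.sum_range_one]
    simp only [Nat.add_zero, Nat.choose_zero_right, Nat.cast_zero, Nat.cast_one]
    push_cast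
    ring
  | succ t =>
    set A : ℤ := ((r + t + 2).choose (r + 1) : ℤ) with hA
    set B : ℤ := ((r + t + 2).choose (r + 2) : ℤ) with hB
    have hsum : (∑ q ∈ range (t + 2), lam r (j + 3) q)
        = (-1) ^ r * (((j : ℤ) + 3) * A - ((r : ℤ) + 1) * B) := by
      have e1 : ∀ q : ℕ, lam r (j + 3) q
          = (-1) ^ r * (((j : ℤ) + 3) * ((r + q).choose q : ℤ)
              - (q : ℤ) * ((r + q).choose q : ℤ)) := by
        intro q
        unfold lam
        push_cast
        ring
      rw [Finset.sum_congr rfl (fun q _ => e1 q)]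
      rw [← Finset.mul_sum, Finset.sum_sub_distrib, ← Finset.mul_sum]
      have c1 : (∑ q ∈ range (t + 2), ((r + q).choose q : ℤ)) = A := by
        rw [hA]
        have := HS1 r (t + 1)
        have harg : r + (t + 1) + 1 = r + t + 2 := by omega
        rw [harg] at this
        exact_mod_cast congrArg (Nat.cast : ℕ → ℤ) this
      have c2 : (∑ q ∈ range (t + 2), (q : ℤ) * ((r + q).choose q : ℤ))
          = ((r : ℤ) + 1) * B := by
        rw [hB]
        have := HS2 r (t + 1)
        have harg : r + (t + 1) + 1 = r + t + 2 := by omega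
        rw [harg] at this
        have := congrArg (Nat.cast : ℕ → ℤ) this
        push_cast at this
        rw [← this]
      rw [c1, c2]
    rw [hsum]
    -- now evaluate lam/mu on the RHS
    have hlam1 : lam (r + 1) (j + 2) (t + 1) = (-1) ^ (r + 1) * (((j : ℤ) + 2) - (t + 1)) * A := by
      unfold lam
      have hsymm : (r + 1 + (t + 1)).choose (t + 1) = (r + t + 2).choose (r + 1) := by
        have harg : r + 1 + (t + 1) = r + t + 2 := by omega
        rw [harg]
        exact choose_symm' (by omega)
      rw [hsymm, hA]
      push_cast
      ring
    have hmu : mu (r + 1) (j + 2) (t + 1)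
        = (-1) ^ (r + 2) * ((((j : ℤ) + 1) - t) * B - (((j : ℤ) + 1) - (t + 1)) * (A + B)) := by
      unfold mu
      rw [if_neg (by omega)]
      unfold lam
      have h1 : j + 2 - 1 = j + 1 := by omega
      have h2 : t + 1 - 1 = t := by omega
      rw [h1, h2]
      have hC1 : (r + 1 + 1 + t).choose t = (r + t + 2).choose (r + 2) := by
        have harg : r + 1 + 1 + t = r + t + 2 := by omega
        rw [harg]
        exact choose_symm' (by omega)
      have hC2 : ((r + 1 + 1 + (t + 1)).choose (t + 1) : ℤ) = A + B := by
        have harg : r + 1 + 1 + (t + 1) = r + t + 3 := by omega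
        rw [harg]
        have hsym : (r + t + 3).choose (t + 1) = (r + t + 3).choose (r + 2) :=
          choose_symm' (by omega)
        rw [hsym]
        have hps : (r + t + 3).choose (r + 2) = (r + t + 2).choose (r + 1) + (r + t + 2).choose (r + 2) := by
          have : r + t + 3 = (r + t + 2) + 1 := by omega
          rw [this, Nat.choose_succ_succ' (r + t + 2) (r + 1)]
        rw [hps, hA, hB]
        push_cast
        ring
      rw [hC1, hC2, hB]
      push_cast
      ring
    rw [hlam1, hmu]
    have hNK : ((t : ℤ) + 1) * A = ((r : ℤ) + 2) * B := by
      have := congrArg (Nat.cast : ℕ → ℤ) (NK r t)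
      push_cast at this
      rw [hA, hB]
      linarith [this]
    rw [pow_succ, pow_succ]
    linear_combination ((-1 : ℤ) ^ r) * hNK

end AlphaAux

namespace AlphaAux

lemma chain_step (r j : ℕ) :
    T (j + 1) (lam r (j + 3)) (mu r (j + 3))
      = T j (lam (r + 1) (j + 2)) (mu (r + 1) (j + 2)) := by
  rw [T_step]
  apply T_congr
  · intro k hk
    exact CI1 r j k hk
  · intro k hk
    rw [CI1 r j k hk]
    exact CI2 r j k hk

lemma chain (M : ℕ) : ∀ j, j ≤ M →
    T j (lam (M - j) (j + 2)) (mu (M - j) (j + 2)) = (-1) ^ (M + 1) := by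
  intro j
  induction j with
  | zero =>
    intro _
    rw [T_zero]
    simp only [Nat.sub_zero]
    unfold mu
    rw [if_neg (by omega)]
    unfold lam
    norm_num
  | succ j ih =>
    intro hj
    have hr : M - j = (M - (j + 1)) + 1 := by omega
    rw [chain_step (M - (j + 1)) j, ← hr]
    exact ih (by omega)

end AlphaAux


namespace AlphaAux

lemma alphaBB_T (m : ℕ) : (alphaBB (m + 2) : ℤ) = T m (fun _ => 0) (fun _ => 1) := by
  rw [alphaBB]
  exact alphaBB_eq_T m

end AlphaAux


open AlphaAux

/-- For n ≥ 3, α_n(b,b) = n · α_{n−1}(b,b) + (−1)^n. -/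
theorem alphaBB_recursion (n : ℕ) (hn : 3 ≤ n) :
    (alphaBB n : ℤ) = n * alphaBB (n - 1) + (-1) ^ n := by
  obtain ⟨M, rfl⟩ : ∃ M, n = M + 3 := ⟨n - 3, by omega⟩
  have hsub : M + 3 - 1 = M + 2 := rfl
  rw [hsub]
  have h1 : (alphaBB (M + 3) : ℤ) = T (M + 1) (fun _ => 0) (fun _ => 1) := alphaBB_T (M + 1)
  have h2 : (alphaBB (M + 2) : ℤ) = T M (fun _ => 0) (fun _ => 1) := alphaBB_T M
  have top : (alphaBB (M + 3) : ℤ) - ((M : ℤ) + 3) * (alphaBB (M + 2) : ℤ)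
      = (-1) ^ (M + 1) := by
    rw [h1, h2, T_step, T_sub]
    have hch := chain M M le_rfl
    rw [Nat.sub_self] at hch
    rw [← hch]
    apply T_congr
    · intro k hk
      rw [FI1, Finset.sum_const, Nat.card_Ico]
      unfold lam
      have hc : M + 3 - (k + 1) = M + 2 - k := by omega
      rw [hc, zero_add, Nat.choose_self]
      simp only [nsmul_eq_mul, mul_one, Nat.cast_one, pow_zero, one_mul]
      push_cast [Nat.cast_sub (show k ≤ M + 2 by omega)]
      ring
    · intro k hk
      rw [Finset.sum_const_zero, FI1, Finset.sum_const, Nat.card_Ico]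
      have hc : M + 3 - (k + 1) = M + 2 - k := by omega
      rw [hc]
      simp only [nsmul_eq_mul, mul_one]
      cases k with
      | zero =>
        unfold mu
        rw [if_pos rfl]
        push_cast
        ring
      | succ t =>
        unfold mu
        rw [if_neg (by omega)]
        unfold lam
        have e1 : M + 2 - 1 = M + 1 := rfl
        have e2 : t + 1 - 1 = t := rfl
        rw [e1, e2]
        have e3 : (0 + 1 + t).choose t = t + 1 := by
          rw [show 0 + 1 + t = t + 1 by omega]
          exact Nat.choose_succ_self_right t
        have e4 : (0 + 1 + (t + 1)).choose (t + 1) = t + 2 := by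
          rw [show 0 + 1 + (t + 1) = (t + 1) + 1 by omega]
          exact Nat.choose_succ_self_right (t + 1)
        rw [e3, e4]
        rw [show M + 2 - (t + 1) = M + 1 - t by omega]
        push_cast [Nat.cast_sub (show t ≤ M + 1 by omega)]
        ring
  have hsign : ((-1 : ℤ)) ^ (M + 3) = (-1) ^ (M + 1) := by
    have : M + 3 = (M + 1) + 2 := by omega
    rw [this, pow_add]
    norm_num
  rw [hsign]
  push_cast at top ⊢
  linarith [top]
end
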